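/- arXiv:1907.05691 — 15 statements merged into one kernel-verified Lean document; each statement's English description precedes it below -/
import Mathlib

section
/- Let (X,d) be a metric space and let f_n (n ∈ ℕ⁺) and f be uniformly continuous self-maps of X such that f_n pointwise weak orbitally converges to f. Then a point x ∈ X is a sensitive point of f if and only if there exists δ > 0 such that for every ε > 0 there exist y ∈ B(x,ε), k ∈ ℕ⁺ and m ∈ ℕ⁺ with d(f_n^k(x), f_n^k(y)) > δ for all n ≥ m (i.e. ⋃_{m≥1} ⋂_{n≥m} Se_x(f_n, ε, δ) ≠ ∅ for every ε > 0). -/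
/-- Pointwise weak orbital convergence and sensitive points.
`x` is a sensitive point of `f` iff there is `δ > 0` such that for every `ε > 0`
the set `⋃_{m≥1} ⋂_{n≥m} Se_x(f_n, ε, δ)` is nonempty. -/
theorem sensitive_point_iff_of_pwoc
    {X : Type*} [MetricSpace X] (F : ℕ → X → X) (f : X → X)
    (hF : ∀ n, UniformContinuous (F n)) (hf : UniformContinuous f)
    (hpwoc : ∀ x : X, ∀ k : ℕ, 1 ≤ k → ∀ ε : ℝ, 0 < ε →
      ∃ N : ℕ, 1 ≤ N ∧ ∀ n, N ≤ n → dist ((F n)^[k] x) (f^[k] x) < ε)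
    (x : X) :
    (∃ δ : ℝ, 0 < δ ∧ ∀ U : Set X, IsOpen U → x ∈ U →
        ∃ y ∈ U, ∃ k : ℕ, 1 ≤ k ∧ δ < dist (f^[k] x) (f^[k] y)) ↔
    (∃ δ : ℝ, 0 < δ ∧ ∀ ε : ℝ, 0 < ε → ∃ m : ℕ, 1 ≤ m ∧
        ∃ y : X, dist x y < ε ∧ ∃ k : ℕ, 1 ≤ k ∧
          ∀ n, m ≤ n → δ < dist ((F n)^[k] x) ((F n)^[k] y)) := by
  constructor
  · rintro ⟨δ, hδ, h⟩
    refine ⟨δ / 2, by linarith, fun ε hε => ?_⟩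
    obtain ⟨y, hy, k, hk, hd⟩ :=
      h (Metric.ball x ε) Metric.isOpen_ball (Metric.mem_ball_self hε)
    obtain ⟨N1, hN1pos, hN1⟩ := hpwoc x k hk (δ / 4) (by linarith)
    obtain ⟨N2, hN2pos, hN2⟩ := hpwoc y k hk (δ / 4) (by linarith)
    refine ⟨max N1 N2, le_trans hN1pos (le_max_left _ _), y,
      by simpa [Metric.mem_ball, dist_comm] using hy, k, hk, fun n hn => ?_⟩
    have h1 := hN1 n (le_trans (le_max_left _ _) hn)
    have h2 := hN2 n (le_trans (le_max_right _ _) hn)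
    have t := dist_triangle4 (f^[k] x) ((F n)^[k] x) ((F n)^[k] y) (f^[k] y)
    rw [dist_comm (f^[k] x) ((F n)^[k] x)] at t
    linarith
  · rintro ⟨δ, hδ, h⟩
    refine ⟨δ / 2, by linarith, fun U hU hxU => ?_⟩
    obtain ⟨ε, hε, hball⟩ := Metric.isOpen_iff.mp hU x hxU
    obtain ⟨m, hm, y, hxy, k, hk, hd⟩ := h ε hε
    refine ⟨y, hball (by simpa [Metric.mem_ball, dist_comm] using hxy), k, hk, ?_⟩
    obtain ⟨N1, -, hN1⟩ := hpwoc x k hk (δ / 4) (by linarith)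
    obtain ⟨N2, -, hN2⟩ := hpwoc y k hk (δ / 4) (by linarith)
    set n := max m (max N1 N2) with hn
    have h1 := hN1 n (le_trans (le_max_left _ _) (le_max_right _ _))
    have h2 := hN2 n (le_trans (le_max_right _ _) (le_max_right _ _))
    have h3 := hd n (le_max_left _ _)
    have t := dist_triangle4 ((F n)^[k] x) (f^[k] x) (f^[k] y) ((F n)^[k] y)
    rw [dist_comm (f^[k] y) ((F n)^[k] y)] at t
    linarith
end

section
/- Let (X,d) be a metric space and let f_n (n ∈ ℕ⁺) and f be uniformly continuous self-maps of X such that f_n pointwise weak orbitally converges to f. Then f has a dense set of periodic points at x ∈ X if and only if for every ε > 0 there exist z with 0 < d(z,x) < ε and k ∈ ℕ⁺ such that for every δ > 0 there exists m ∈ ℕ⁺ with d(f_n^k(z), z) < δ for all n ≥ m (equivalently, f_n^k(z) → z as n → ∞; i.e. ⋃_{z∈B⁻(x,ε)} ⋂_{δ>0} ⋃_{m≥1} ⋂_{n≥m} P(f_n, z, δ) ≠ ∅). -/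
/-- Pointwise weak orbital convergence and dense periodic points at `x`.
`f` has a dense set of periodic points at `x` iff for every `ε > 0` the set
`⋃_{z∈B⁻(x,ε)} ⋂_{δ>0} ⋃_{m≥1} ⋂_{n≥m} P(f_n, z, δ)` is nonempty. -/
theorem dense_periodic_at_point_iff_of_pwoc
    {X : Type*} [MetricSpace X] (F : ℕ → X → X) (f : X → X)
    (hF : ∀ n, UniformContinuous (F n)) (hf : UniformContinuous f)
    (hpwoc : ∀ x : X, ∀ k : ℕ, 1 ≤ k → ∀ ε : ℝ, 0 < ε →
      ∃ N : ℕ, 1 ≤ N ∧ ∀ n, N ≤ n → dist ((F n)^[k] x) (f^[k] x) < ε)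
    (x : X) :
    (∀ U : Set X, IsOpen U → x ∈ U →
        ∃ z ∈ U, z ≠ x ∧ ∃ k : ℕ, 1 ≤ k ∧ f^[k] z = z) ↔
    (∀ ε : ℝ, 0 < ε → ∃ z : X, z ≠ x ∧ dist x z < ε ∧ ∃ k : ℕ, 1 ≤ k ∧
        ∀ δ : ℝ, 0 < δ → ∃ m : ℕ, 1 ≤ m ∧
          ∀ n, m ≤ n → dist ((F n)^[k] z) z < δ) := by
  constructor
  · intro h ε hε
    obtain ⟨z, hzU, hzx, k, hk, hper⟩ := h (Metric.ball x ε) Metric.isOpen_ball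
      (Metric.mem_ball_self hε)
    refine ⟨z, hzx, ?_, k, hk, ?_⟩
    · rw [dist_comm]; exact Metric.mem_ball.mp hzU
    · intro δ hδ
      obtain ⟨N, hN1, hN⟩ := hpwoc z k hk δ hδ
      exact ⟨N, hN1, fun n hn => by simpa [hper] using hN n hn⟩
  · intro h U hU hxU
    obtain ⟨ε, hε, hball⟩ := Metric.isOpen_iff.mp hU x hxU
    obtain ⟨z, hzx, hdist, k, hk, hconv⟩ := h ε hε
    refine ⟨z, hball (by rw [Metric.mem_ball, dist_comm]; exact hdist), hzx, k, hk, ?_⟩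
    have : dist (f^[k] z) z = 0 := by
      by_contra hne
      have hpos : 0 < dist (f^[k] z) z := lt_of_le_of_ne dist_nonneg (Ne.symm hne)
      obtain ⟨m, hm1, hm⟩ := hconv (dist (f^[k] z) z / 2) (by linarith)
      obtain ⟨N, hN1, hN⟩ := hpwoc z k hk (dist (f^[k] z) z / 2) (by linarith)
      have h1 := hm (max m N) (le_max_left _ _)
      have h2 := hN (max m N) (le_max_right _ _)
      have := dist_triangle (f^[k] z) ((F (max m N))^[k] z) z
      rw [dist_comm] at h2
      linarith
    exact dist_eq_zero.mp this
end

section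
/- Let (X,d) be a metric space and let f_n (n ∈ ℕ⁺) and f be uniformly continuous self-maps of X such that f_n pointwise weak orbitally converges to f. Then a point x ∈ X is a topologically transitive point of f if and only if for every open set U containing x and every non-empty open set V there exist y ∈ U, k ∈ ℕ⁺ and m ∈ ℕ⁺ with f_n^k(y) ∈ V for all n ≥ m (i.e. ⋃_{m≥1} ⋂_{n≥m} Tt(f_n, x, U, V) ≠ ∅). -/
/-- Pointwise weak orbital convergence and topologically transitive points.
`x` is a topologically transitive point of `f` iff for every open `U ∋ x` and nonempty
open `V` the set `⋃_{m≥1} ⋂_{n≥m} Tt(f_n, x, U, V)` is nonempty. -/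
theorem transitive_point_iff_of_pwoc
    {X : Type*} [MetricSpace X] (F : ℕ → X → X) (f : X → X)
    (hF : ∀ n, UniformContinuous (F n)) (hf : UniformContinuous f)
    (hpwoc : ∀ x : X, ∀ k : ℕ, 1 ≤ k → ∀ ε : ℝ, 0 < ε →
      ∃ N : ℕ, 1 ≤ N ∧ ∀ n, N ≤ n → dist ((F n)^[k] x) (f^[k] x) < ε)
    (x : X) :
    (∀ U : Set X, IsOpen U → x ∈ U → ∀ V : Set X, IsOpen V → V.Nonempty →
        ∃ k : ℕ, 1 ≤ k ∧ ∃ y ∈ U, f^[k] y ∈ V) ↔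
    (∀ U : Set X, IsOpen U → x ∈ U → ∀ V : Set X, IsOpen V → V.Nonempty →
        ∃ m : ℕ, 1 ≤ m ∧ ∃ y ∈ U, ∃ k : ℕ, 1 ≤ k ∧
          ∀ n, m ≤ n → (F n)^[k] y ∈ V) := by
  constructor
  · intro h U hU hxU V hV hVne
    obtain ⟨k, hk, y, hyU, hyV⟩ := h U hU hxU V hV hVne
    obtain ⟨ε, hε, hball⟩ := Metric.isOpen_iff.mp hV _ hyV
    obtain ⟨N, hN, hNd⟩ := hpwoc y k hk ε hε
    exact ⟨N, hN, y, hyU, k, hk, fun n hn => hball (hNd n hn)⟩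
  · intro h U hU hxU V hV hVne
    obtain ⟨v, hv⟩ := hVne
    obtain ⟨ε, hε, hball⟩ := Metric.isOpen_iff.mp hV _ hv
    obtain ⟨m, hm, y, hyU, k, hk, hFk⟩ := h U hU hxU (Metric.ball v (ε / 2))
      Metric.isOpen_ball ⟨v, Metric.mem_ball_self (by linarith)⟩
    obtain ⟨N, hN, hNd⟩ := hpwoc y k hk (ε / 2) (by linarith)
    refine ⟨k, hk, y, hyU, hball ?_⟩
    have h1 := hFk (max m N) (le_max_left _ _)
    have h2 := hNd (max m N) (le_max_right _ _)
    rw [Metric.mem_ball] at h1 ⊢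
    calc dist (f^[k] y) v ≤ dist (f^[k] y) ((F (max m N))^[k] y)
          + dist ((F (max m N))^[k] y) v := dist_triangle _ _ _
      _ < ε / 2 + ε / 2 := by rw [dist_comm] at h2; linarith
      _ = ε := by linarith
end

section
/- Let (X,d) be a metric space and let f_n (n ∈ ℕ⁺) and f be uniformly continuous self-maps of X such that f_n pointwise weak orbitally converges to f. Then a point x ∈ X is a topologically mixing point of f if and only if for every open set U containing x and every non-empty open set V, the set of all k ∈ ℕ⁺ for which there exist y ∈ U and m ∈ ℕ⁺ with f_n^k(y) ∈ V for all n ≥ m is cofinite in ℕ⁺ (i.e. the image of the projection (y,k) ↦ k on ⋃_{m≥1} ⋂_{n≥m} Tt(f_n, x, U, V) is cofinite). -/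
/-- Pointwise weak orbital convergence and topologically mixing points.
`x` is a topologically mixing point of `f` iff for every open `U ∋ x` and nonempty open `V`
the image of the projection `(y,k) ↦ k` on `⋃_{m≥1} ⋂_{n≥m} Tt(f_n, x, U, V)` is cofinite
in `ℕ⁺`. -/
theorem mixing_point_iff_of_pwoc
    {X : Type*} [MetricSpace X] (F : ℕ → X → X) (f : X → X)
    (hF : ∀ n, UniformContinuous (F n)) (hf : UniformContinuous f)
    (hpwoc : ∀ x : X, ∀ k : ℕ, 1 ≤ k → ∀ ε : ℝ, 0 < ε →
      ∃ N : ℕ, 1 ≤ N ∧ ∀ n, N ≤ n → dist ((F n)^[k] x) (f^[k] x) < ε)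
    (x : X) :
    (∀ U : Set X, IsOpen U → x ∈ U → ∀ V : Set X, IsOpen V → V.Nonempty →
        {k : ℕ | 1 ≤ k ∧ ¬ ∃ y ∈ U, f^[k] y ∈ V}.Finite) ↔
    (∀ U : Set X, IsOpen U → x ∈ U → ∀ V : Set X, IsOpen V → V.Nonempty →
        {k : ℕ | 1 ≤ k ∧
          ¬ ∃ y ∈ U, ∃ m : ℕ, 1 ≤ m ∧ ∀ n, m ≤ n → (F n)^[k] y ∈ V}.Finite) := by
  constructor
  · intro h U hU hxU V hV hVne
    refine (h U hU hxU V hV hVne).subset ?_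
    rintro k ⟨hk1, hk2⟩
    refine ⟨hk1, fun ⟨y, hyU, hyV⟩ => hk2 ⟨y, hyU, ?_⟩⟩
    obtain ⟨ε, hε, hball⟩ := Metric.isOpen_iff.1 hV _ hyV
    obtain ⟨N, hN1, hN⟩ := hpwoc y k hk1 ε hε
    exact ⟨N, hN1, fun n hn => hball (Metric.mem_ball.2 (hN n hn))⟩
  · intro h U hU hxU V hV hVne
    obtain ⟨v, hv⟩ := hVne
    obtain ⟨ε, hε, hball⟩ := Metric.isOpen_iff.1 hV v hv
    refine (h U hU hxU (Metric.ball v (ε / 2)) Metric.isOpen_ball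
      ⟨v, Metric.mem_ball_self (by linarith)⟩).subset ?_
    rintro k ⟨hk1, hk2⟩
    refine ⟨hk1, fun ⟨y, hyU, m, hm1, hm⟩ => hk2 ⟨y, hyU, ?_⟩⟩
    obtain ⟨N, hN1, hN⟩ := hpwoc y k hk1 (ε / 2) (by linarith)
    have h1 := hN (max N m) (le_max_left _ _)
    have h2 := hm (max N m) (le_max_right _ _)
    apply hball
    rw [Metric.mem_ball] at h2 ⊢
    calc dist (f^[k] y) v ≤ dist (f^[k] y) ((F (max N m))^[k] y)
          + dist ((F (max N m))^[k] y) v := dist_triangle _ _ _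
      _ < ε / 2 + ε / 2 := by rw [dist_comm] at h1; linarith
      _ = ε := by ring
end

section
/- Let (X,d) be an infinite metric space and let f_n (n ∈ ℕ⁺) and f be uniformly continuous self-maps of X such that f_n pointwise weak orbitally converges to f. Then x ∈ X is a Devaney chaotic point of f (i.e. x is simultaneously a topologically transitive point of f, a sensitive point of f, and f has a dense set of periodic points at x) if and only if both of the following hold: (1) for every ε > 0 there exist z with 0 < d(z,x) < ε and k ∈ ℕ⁺ such that f_n^k(z) → z as n → ∞; and (2) for every open set U containing x and every non-empty open set V there exist y ∈ U, k ∈ ℕ⁺ and m ∈ ℕ⁺ with f_n^k(y) ∈ V for all n ≥ m. -/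
open Filter Topology

private lemma iterate_mod_of_fixed {X : Type*} {f : X → X} {p : X} {n : ℕ}
    (h : f^[n] p = p) (i : ℕ) : f^[i] p = f^[i % n] p := by
  conv_lhs => rw [← Nat.mod_add_div i n]
  rw [Function.iterate_add_apply, Function.iterate_mul, Function.iterate_fixed h]

private lemma sensitive_aux {X : Type*} [MetricSpace X] (f : X → X) (hf : Continuous f)
    (x : X)
    (htrans : ∀ U : Set X, IsOpen U → x ∈ U → ∀ V : Set X, IsOpen V → V.Nonempty →
        ∃ k : ℕ, 1 ≤ k ∧ ∃ y ∈ U, f^[k] y ∈ V)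
    (hper : ∀ U : Set X, IsOpen U → x ∈ U →
        ∃ z ∈ U, z ≠ x ∧ ∃ k : ℕ, 1 ≤ k ∧ f^[k] z = z) :
    ∃ δ : ℝ, 0 < δ ∧ ∀ U : Set X, IsOpen U → x ∈ U →
        ∃ y ∈ U, ∃ k : ℕ, 1 ≤ k ∧ δ < dist (f^[k] x) (f^[k] y) := by
  classical
  -- two periodic points with disjoint orbits
  obtain ⟨p1, -, hp1x, n1, hn1, hp1⟩ := hper Set.univ isOpen_univ (Set.mem_univ x)
  set S1 : Finset X := (Finset.range n1).image (fun i => f^[i] p1) with hS1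
  have hmem1 : ∀ i, f^[i] p1 ∈ S1 := by
    intro i
    rw [iterate_mod_of_fixed hp1 i]
    exact Finset.mem_image_of_mem _ (Finset.mem_range.mpr (Nat.mod_lt _ hn1))
  have hp1S : p1 ∈ S1 := by simpa using hmem1 0
  have hne1 : (S1.erase x).Nonempty := ⟨p1, Finset.mem_erase.mpr ⟨hp1x, hp1S⟩⟩
  set r := (S1.erase x).inf' hne1 (fun w => dist x w) with hr
  have hrpos : 0 < r := by
    rw [hr, Finset.lt_inf'_iff]
    intro w hw
    exact dist_pos.mpr (Ne.symm (Finset.ne_of_mem_erase hw))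
  obtain ⟨p2, hp2ball, hp2x, n2, hn2, hp2⟩ :=
    hper (Metric.ball x r) Metric.isOpen_ball (Metric.mem_ball_self hrpos)
  have hmem2 : ∀ i, ∃ j, f^[i] p2 = f^[j] p2 ∧ j < n2 := by
    intro i
    exact ⟨i % n2, iterate_mod_of_fixed hp2 i, Nat.mod_lt _ hn2⟩
  set S2 : Finset X := (Finset.range n2).image (fun i => f^[i] p2) with hS2
  have hmem2' : ∀ i, f^[i] p2 ∈ S2 := by
    intro i
    rw [iterate_mod_of_fixed hp2 i]
    exact Finset.mem_image_of_mem _ (Finset.mem_range.mpr (Nat.mod_lt _ hn2))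
  have hp2S1 : p2 ∉ S1 := by
    intro h
    have h1 : r ≤ dist x p2 := Finset.inf'_le _ (Finset.mem_erase.mpr ⟨hp2x, h⟩)
    have h2 : dist p2 x < r := Metric.mem_ball.mp hp2ball
    rw [dist_comm] at h2
    linarith
  have hdisj : ∀ a ∈ S1, ∀ b ∈ S2, a ≠ b := by
    intro a ha b hb hab
    rw [hS1, Finset.mem_image] at ha
    rw [hS2, Finset.mem_image] at hb
    obtain ⟨j, -, rfl⟩ := ha
    obtain ⟨i, -, rfl⟩ := hb
    apply hp2S1
    have hile : i ≤ n2 * i := Nat.le_mul_of_pos_left i hn2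
    have : p2 = f^[(n2 * i - i) + j] p1 := by
      have h1 : f^[n2 * i] p2 = p2 := by
        rw [Function.iterate_mul]
        exact Function.iterate_fixed hp2 _
      calc p2 = f^[n2 * i] p2 := h1.symm
        _ = f^[n2 * i - i] (f^[i] p2) := by
            rw [← Function.iterate_add_apply, Nat.sub_add_cancel hile]
        _ = f^[n2 * i - i] (f^[j] p1) := by rw [← hab]
        _ = f^[(n2 * i - i) + j] p1 := (Function.iterate_add_apply f _ j p1).symm
    rw [this]
    exact hmem1 _
  have hp2S2 : p2 ∈ S2 := by simpa using hmem2' 0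
  have hne12 : (S1 ×ˢ S2).Nonempty := ⟨(p1, p2), Finset.mem_product.mpr ⟨hp1S, hp2S2⟩⟩
  set δ0 := (S1 ×ˢ S2).inf' hne12 (fun ab => dist ab.1 ab.2) with hδ0
  have hδ0pos : 0 < δ0 := by
    rw [hδ0, Finset.lt_inf'_iff]
    intro ab hab
    rw [Finset.mem_product] at hab
    exact dist_pos.mpr (hdisj _ hab.1 _ hab.2)
  have hδ0le : ∀ a ∈ S1, ∀ b ∈ S2, δ0 ≤ dist a b := by
    intro a ha b hb
    exact Finset.inf'_le _ (show (a, b) ∈ S1 ×ˢ S2 from Finset.mem_product.mpr ⟨ha, hb⟩)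
  -- choose a periodic point whose whole orbit keeps distance δ0/2 from x
  have hq : ∃ q : X, ∀ i, δ0 / 2 ≤ dist x (f^[i] q) := by
    by_cases hcase : ∀ i, δ0 / 2 ≤ dist x (f^[i] p1)
    · exact ⟨p1, hcase⟩
    · push_neg at hcase
      obtain ⟨i0, hi0⟩ := hcase
      refine ⟨p2, fun j => ?_⟩
      have h1 : δ0 ≤ dist (f^[i0] p1) (f^[j] p2) := hδ0le _ (hmem1 i0) _ (hmem2' j)
      have h2 := dist_triangle (f^[i0] p1) x (f^[j] p2)
      rw [dist_comm (f^[i0] p1) x] at h2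
      linarith
  obtain ⟨q, hq⟩ := hq
  set δ := δ0 / 10 with hδ
  refine ⟨δ, by positivity, ?_⟩
  intro U hU hxU
  have hU'o : IsOpen (U ∩ Metric.ball x δ) := hU.inter Metric.isOpen_ball
  have hxU' : x ∈ U ∩ Metric.ball x δ := ⟨hxU, Metric.mem_ball_self (by positivity)⟩
  obtain ⟨p, hpU, hpx, n, hn, hpfix⟩ := hper _ hU'o hxU'
  set W : Set X := ⋂ i ∈ Finset.range (n + 1), f^[i] ⁻¹' Metric.ball (f^[i] q) δ with hW
  have hWopen : IsOpen W := by
    apply isOpen_biInter_finset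
    intro i _
    exact (Metric.isOpen_ball).preimage (hf.iterate i)
  have hqW : q ∈ W := by
    rw [hW]
    simp only [Set.mem_iInter, Set.mem_preimage, Metric.mem_ball]
    intro i _
    simpa using (by positivity : (0:ℝ) < δ)
  obtain ⟨k, hk, y, hyU, hyW⟩ := htrans _ hU'o hxU' W hWopen ⟨q, hqW⟩
  set j := k / n + 1 with hj
  set m := n * j with hm
  have hdm := Nat.div_add_mod k n
  have hml := Nat.mod_lt k hn
  have hm' : m = n * (k / n) + n := by rw [hm, hj]; ring
  have hkm : k < m := by omega
  set t := m - k with ht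
  have ht1 : 1 ≤ t := by omega
  have ht2 : t ≤ n := by omega
  have hyt : f^[t] (f^[k] y) ∈ Metric.ball (f^[t] q) δ := by
    rw [hW] at hyW
    simp only [Set.mem_iInter, Set.mem_preimage] at hyW
    exact hyW t (Finset.mem_range.mpr (by omega))
  have hmy : f^[m] y = f^[t] (f^[k] y) := by
    rw [show m = t + k by omega, Function.iterate_add_apply]
  have hmp : f^[m] p = p := by
    rw [hm, Function.iterate_mul]
    exact Function.iterate_fixed hpfix j
  have hm1 : 1 ≤ m := by omega
  have h1 : δ0 / 2 ≤ dist x (f^[t] q) := hq t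
  have h2 : dist (f^[t] q) (f^[m] y) < δ := by
    rw [hmy, dist_comm]
    exact Metric.mem_ball.mp hyt
  have h3 : dist x p < δ := by
    have := Metric.mem_ball.mp hpU.2
    rwa [dist_comm] at this
  have key : 3 * δ < dist p (f^[m] y) := by
    have h4 := dist_triangle4 x p (f^[m] y) (f^[t] q)
    have h5 : dist (f^[m] y) (f^[t] q) = dist (f^[t] q) (f^[m] y) := dist_comm _ _
    rw [hδ] at *
    linarith
  rcases le_or_gt (dist (f^[m] x) (f^[m] p)) δ with hcp | hcp
  · refine ⟨y, hyU.1, m, hm1, ?_⟩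
    have h6 := dist_triangle p (f^[m] x) (f^[m] y)
    have h7 : dist p (f^[m] x) = dist (f^[m] x) (f^[m] p) := by
      rw [hmp] at hcp ⊢
      exact dist_comm _ _
    linarith
  · exact ⟨p, hpU.1, m, hm1, hcp⟩

/-- Pointwise weak orbital convergence and Devaney chaotic points on an
infinite metric space. `x` is a Devaney chaotic point of `f` (transitive point, sensitive
point, and dense periodic points at `x`) iff conditions (1) and (2) hold. -/
theorem devaney_chaotic_point_iff_of_pwoc
    {X : Type*} [MetricSpace X] [Infinite X] (F : ℕ → X → X) (f : X → X)
    (hF : ∀ n, UniformContinuous (F n)) (hf : UniformContinuous f)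
    (hpwoc : ∀ x : X, ∀ k : ℕ, 1 ≤ k → ∀ ε : ℝ, 0 < ε →
      ∃ N : ℕ, 1 ≤ N ∧ ∀ n, N ≤ n → dist ((F n)^[k] x) (f^[k] x) < ε)
    (x : X) :
    ((∀ U : Set X, IsOpen U → x ∈ U → ∀ V : Set X, IsOpen V → V.Nonempty →
        ∃ k : ℕ, 1 ≤ k ∧ ∃ y ∈ U, f^[k] y ∈ V) ∧
     (∃ δ : ℝ, 0 < δ ∧ ∀ U : Set X, IsOpen U → x ∈ U →
        ∃ y ∈ U, ∃ k : ℕ, 1 ≤ k ∧ δ < dist (f^[k] x) (f^[k] y)) ∧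
     (∀ U : Set X, IsOpen U → x ∈ U →
        ∃ z ∈ U, z ≠ x ∧ ∃ k : ℕ, 1 ≤ k ∧ f^[k] z = z)) ↔
    ((∀ ε : ℝ, 0 < ε → ∃ z : X, z ≠ x ∧ dist x z < ε ∧ ∃ k : ℕ, 1 ≤ k ∧
        Tendsto (fun n => (F n)^[k] z) atTop (𝓝 z)) ∧
     (∀ U : Set X, IsOpen U → x ∈ U → ∀ V : Set X, IsOpen V → V.Nonempty →
        ∃ y ∈ U, ∃ k : ℕ, 1 ≤ k ∧ ∃ m : ℕ, 1 ≤ m ∧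
          ∀ n, m ≤ n → (F n)^[k] y ∈ V)) := by
  have htend : ∀ z : X, ∀ k : ℕ, 1 ≤ k →
      Tendsto (fun n => (F n)^[k] z) atTop (𝓝 (f^[k] z)) := by
    intro z k hk
    rw [Metric.tendsto_atTop]
    intro ε hε
    obtain ⟨N, -, hN⟩ := hpwoc z k hk ε hε
    exact ⟨N, hN⟩
  constructor
  · rintro ⟨htrans, -, hper⟩
    constructor
    · -- condition (1)
      intro ε hε
      obtain ⟨z, hzb, hzx, k, hk, hfix⟩ :=
        hper (Metric.ball x ε) Metric.isOpen_ball (Metric.mem_ball_self hε)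
      refine ⟨z, hzx, ?_, k, hk, ?_⟩
      · rw [dist_comm]; exact Metric.mem_ball.mp hzb
      · have := htend z k hk
        rwa [hfix] at this
    · -- condition (2)
      intro U hU hxU V hV hVne
      obtain ⟨k, hk, y, hyU, hyV⟩ := htrans U hU hxU V hV hVne
      obtain ⟨r, hr, hball⟩ := Metric.isOpen_iff.mp hV _ hyV
      obtain ⟨N, hN1, hN⟩ := hpwoc y k hk r hr
      refine ⟨y, hyU, k, hk, N, hN1, fun n hn => ?_⟩
      exact hball (Metric.mem_ball.mpr (hN n hn))
  · rintro ⟨h1, h2⟩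
    have htrans : ∀ U : Set X, IsOpen U → x ∈ U → ∀ V : Set X, IsOpen V → V.Nonempty →
        ∃ k : ℕ, 1 ≤ k ∧ ∃ y ∈ U, f^[k] y ∈ V := by
      intro U hU hxU V hV hVne
      obtain ⟨v, hv⟩ := hVne
      obtain ⟨r, hr, hball⟩ := Metric.isOpen_iff.mp hV _ hv
      have hr2 : 0 < r / 2 := by positivity
      obtain ⟨y, hyU, k, hk, m, hm1, hmem⟩ :=
        h2 U hU hxU (Metric.ball v (r / 2)) Metric.isOpen_ball
          ⟨v, Metric.mem_ball_self hr2⟩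
      obtain ⟨N, -, hN⟩ := hpwoc y k hk (r / 2) hr2
      set n := max m N with hn
      have hd1 : dist ((F n)^[k] y) (f^[k] y) < r / 2 := hN n (le_max_right _ _)
      have hd2 : dist ((F n)^[k] y) v < r / 2 :=
        Metric.mem_ball.mp (hmem n (le_max_left _ _))
      refine ⟨k, hk, y, hyU, hball (Metric.mem_ball.mpr ?_)⟩
      have := dist_triangle (f^[k] y) ((F n)^[k] y) v
      rw [dist_comm (f^[k] y) ((F n)^[k] y)] at this
      linarith
    have hper : ∀ U : Set X, IsOpen U → x ∈ U →
        ∃ z ∈ U, z ≠ x ∧ ∃ k : ℕ, 1 ≤ k ∧ f^[k] z = z := by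
      intro U hU hxU
      obtain ⟨ε, hε, hball⟩ := Metric.isOpen_iff.mp hU _ hxU
      obtain ⟨z, hzx, hdz, k, hk, htendz⟩ := h1 ε hε
      refine ⟨z, hball (Metric.mem_ball.mpr (by rwa [dist_comm])), hzx, k, hk, ?_⟩
      exact tendsto_nhds_unique (htend z k hk) htendz
    exact ⟨htrans, sensitive_aux f hf.continuous x htrans hper, hper⟩
end

section
/- Let (X,d) be a metric space, let f_n (n ∈ ℕ⁺) and f be uniformly continuous self-maps of X with f_n pointwise weak orbitally converging to f, and let μ be a non-atomic Borel measure on X with μ(X) > 0. Then μ is positively pointwise expansive for f at x ∈ X if and only if there exists δ > 0 such that μ({y ∈ X : ⋃_{m≥1} ⋂_{n≥m} E⁺_x(f_n, y, δ) = ∅}) = 0, i.e. the set of y ∈ X for which no k ∈ ℕ and m ∈ ℕ⁺ satisfy d(f_n^k(x), f_n^k(y)) > δ for all n ≥ m, has μ-measure zero. -/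
open MeasureTheory

/-- Pointwise weak orbital convergence and positively pointwise expansive
measures. The non-atomic Borel measure `μ` is positively pointwise expansive for `f` at
`x` iff there is `δ > 0` with `μ({y : ⋃_{m≥1} ⋂_{n≥m} E⁺_x(f_n, y, δ) = ∅}) = 0`. -/
theorem positively_pointwise_expansive_measure_iff_of_pwoc
    {X : Type*} [MetricSpace X] [MeasurableSpace X] [BorelSpace X]
    (F : ℕ → X → X) (f : X → X)
    (hF : ∀ n, UniformContinuous (F n)) (hf : UniformContinuous f)
    (hpwoc : ∀ x : X, ∀ k : ℕ, 1 ≤ k → ∀ ε : ℝ, 0 < ε →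
      ∃ N : ℕ, 1 ≤ N ∧ ∀ n, N ≤ n → dist ((F n)^[k] x) (f^[k] x) < ε)
    (μ : Measure X) (hμna : ∀ z : X, μ {z} = 0) (hμnt : 0 < μ Set.univ)
    (x : X) :
    (∃ δ : ℝ, 0 < δ ∧
        μ {y : X | ∀ k : ℕ, dist (f^[k] x) (f^[k] y) ≤ δ} = 0) ↔
    (∃ δ : ℝ, 0 < δ ∧
        μ {y : X | ¬ ∃ m : ℕ, 1 ≤ m ∧ ∃ k : ℕ,
            ∀ n, m ≤ n → δ < dist ((F n)^[k] x) ((F n)^[k] y)} = 0) := by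
  constructor
  · rintro ⟨δ, hδ, hμ⟩
    refine ⟨δ, hδ, measure_mono_null ?_ hμ⟩
    intro y hy
    simp only [Set.mem_setOf_eq] at hy ⊢
    push_neg at hy
    intro k
    rcases Nat.eq_zero_or_pos k with rfl | hk
    · obtain ⟨n, -, h⟩ := hy 1 le_rfl 0
      simpa using h
    · refine le_of_forall_pos_le_add fun ε hε => ?_
      obtain ⟨N1, hN1, hx1⟩ := hpwoc x k hk (ε / 2) (by positivity)
      obtain ⟨N2, hN2, hy2⟩ := hpwoc y k hk (ε / 2) (by positivity)
      obtain ⟨n, hn, hd⟩ := hy (max N1 N2) (le_trans hN1 (le_max_left _ _)) k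
      have h1 := hx1 n (le_trans (le_max_left _ _) hn)
      have h2 := hy2 n (le_trans (le_max_right _ _) hn)
      have h3 := dist_triangle4 (f^[k] x) ((F n)^[k] x) ((F n)^[k] y) (f^[k] y)
      have h4 : dist (f^[k] x) ((F n)^[k] x) = dist ((F n)^[k] x) (f^[k] x) :=
        dist_comm _ _
      linarith
  · rintro ⟨δ, hδ, hμ⟩
    refine ⟨δ / 2, by positivity, measure_mono_null ?_ hμ⟩
    intro y hy
    simp only [Set.mem_setOf_eq] at hy ⊢
    rintro ⟨m, hm, k, hk⟩
    rcases Nat.eq_zero_or_pos k with rfl | hkpos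
    · have := hk m le_rfl
      have h0 := hy 0
      simp only [Function.iterate_zero, id] at this h0
      linarith
    · obtain ⟨N1, hN1, hx1⟩ := hpwoc x k hkpos (δ / 4) (by positivity)
      obtain ⟨N2, hN2, hy2⟩ := hpwoc y k hkpos (δ / 4) (by positivity)
      set n := max m (max N1 N2) with hn
      have hd := hk n (le_max_left _ _)
      have h1 := hx1 n (le_trans (le_max_left _ _) (le_max_right _ _))
      have h2 := hy2 n (le_trans (le_max_right _ _) (le_max_right _ _))
      have h3 := dist_triangle4 ((F n)^[k] x) (f^[k] x) (f^[k] y) ((F n)^[k] y)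
      have h4 : dist (f^[k] y) ((F n)^[k] y) = dist ((F n)^[k] y) (f^[k] y) :=
        dist_comm _ _
      have h5 := hy k
      linarith
end

section
/- Let (X,d) be a metric space admitting a non-trivial non-atomic Borel measure, and let f_n (n ∈ ℕ⁺) and f be uniformly continuous self-maps of X with f_n pointwise weak orbitally converging to f. Then f is positively pointwise measure expansive at x ∈ X if and only if there exists δ > 0 such that ν({y ∈ X : ⋃_{m≥1} ⋂_{n≥m} E⁺_x(f_n, y, δ) = ∅}) = 0 for every non-atomic Borel measure ν on X. -/
/-!
Pointwise weak orbital convergence makes `n ↦ dist (f_n^k x) (f_n^k y)` converge to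
`dist (f^k x) (f^k y)` for each `k`. Hence the set of `y` for which no time `k` separates the
`f_n`-orbits of `x` and `y` by more than `δ` for all large `n` lies inside `Φ^f_δ(x)` and contains
`Φ^f_{δ'}(x)` for every `δ' < δ`; null sets pass between the two conditions by monotonicity.
-/

open MeasureTheory Filter Topology

section OrbitalLimit

variable {X : Type*} [PseudoMetricSpace X] {F : ℕ → X → X} {f : X → X}

theorem tendsto_iterate_of_pwoc
    (hpwoc : ∀ x : X, ∀ k : ℕ, 1 ≤ k → ∀ ε : ℝ, 0 < ε →
      ∃ N : ℕ, 1 ≤ N ∧ ∀ n, N ≤ n → dist ((F n)^[k] x) (f^[k] x) < ε)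
    (x : X) (k : ℕ) : Tendsto (fun n => (F n)^[k] x) atTop (𝓝 (f^[k] x)) := by
  rcases Nat.eq_zero_or_pos k with rfl | hk
  · exact tendsto_const_nhds
  · refine Metric.tendsto_atTop.2 fun ε hε => ?_
    obtain ⟨N, -, hN⟩ := hpwoc x k hk ε hε
    exact ⟨N, hN⟩

variable (hlim : ∀ z k, Tendsto (fun n => (F n)^[k] z) atTop (𝓝 (f^[k] z)))
include hlim

theorem setOf_not_eventually_separated_subset (x : X) (δ : ℝ) :
    {y : X | ¬ ∃ m : ℕ, 1 ≤ m ∧ ∃ k : ℕ, ∀ n, m ≤ n → δ < dist ((F n)^[k] x) ((F n)^[k] y)} ⊆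
      {y : X | ∀ k : ℕ, dist (f^[k] x) (f^[k] y) ≤ δ} := by
  intro y hy k
  push Not at hy
  have hfreq : ∃ᶠ n in atTop, dist ((F n)^[k] x) ((F n)^[k] y) ∈ Set.Iic δ :=
    frequently_atTop.2 fun a => hy (a + 1) (Nat.le_add_left 1 a) k |>.imp
      fun n ⟨han, hn⟩ => ⟨by omega, hn⟩
  exact isClosed_Iic.mem_of_frequently_of_tendsto hfreq ((hlim x k).dist (hlim y k))

theorem subset_setOf_not_eventually_separated (x : X) {δ' δ : ℝ} (hδ : δ' < δ) :
    {y : X | ∀ k : ℕ, dist (f^[k] x) (f^[k] y) ≤ δ'} ⊆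
      {y : X | ¬ ∃ m : ℕ, 1 ≤ m ∧ ∃ k : ℕ,
        ∀ n, m ≤ n → δ < dist ((F n)^[k] x) ((F n)^[k] y)} := by
  rintro y hy ⟨m, -, k, hsep⟩
  have hclose : ∀ᶠ n in atTop, dist ((F n)^[k] x) ((F n)^[k] y) < δ :=
    ((hlim x k).dist (hlim y k)).eventually (gt_mem_nhds ((hy k).trans_lt hδ))
  obtain ⟨n, hmn, hn⟩ := ((eventually_ge_atTop m).and hclose).exists
  exact (hsep n hmn).not_gt hn

end OrbitalLimit

theorem positively_pointwise_measure_expansive_iff_of_pwoc_general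
    {X : Type*} [MetricSpace X] [MeasurableSpace X]
    (F : ℕ → X → X) (f : X → X)
    (hpwoc : ∀ x : X, ∀ k : ℕ, 1 ≤ k → ∀ ε : ℝ, 0 < ε →
      ∃ N : ℕ, 1 ≤ N ∧ ∀ n, N ≤ n → dist ((F n)^[k] x) (f^[k] x) < ε)
    (x : X) :
    (∃ δ : ℝ, 0 < δ ∧ ∀ ν : Measure X, (∀ z : X, ν {z} = 0) →
        ν {y : X | ∀ k : ℕ, dist (f^[k] x) (f^[k] y) ≤ δ} = 0) ↔
    (∃ δ : ℝ, 0 < δ ∧ ∀ ν : Measure X, (∀ z : X, ν {z} = 0) →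
        ν {y : X | ¬ ∃ m : ℕ, 1 ≤ m ∧ ∃ k : ℕ,
            ∀ n, m ≤ n → δ < dist ((F n)^[k] x) ((F n)^[k] y)} = 0) := by
  have hlim := tendsto_iterate_of_pwoc hpwoc
  constructor
  · rintro ⟨δ, hδ, hnull⟩
    exact ⟨δ, hδ, fun ν hν =>
      measure_mono_null (setOf_not_eventually_separated_subset hlim x δ) (hnull ν hν)⟩
  · rintro ⟨δ, hδ, hnull⟩
    exact ⟨δ / 2, half_pos hδ, fun ν hν =>
      measure_mono_null (subset_setOf_not_eventually_separated hlim x (half_lt_self hδ))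
        (hnull ν hν)⟩

/-- Pointwise weak orbital convergence on a space admitting a non-trivial
non-atomic Borel measure. `f` is positively pointwise measure expansive at `x` iff there
is `δ > 0` such that `ν({y : ⋃_{m≥1} ⋂_{n≥m} E⁺_x(f_n, y, δ) = ∅}) = 0` for every
non-atomic Borel measure `ν`. -/
theorem positively_pointwise_measure_expansive_iff_of_pwoc
    {X : Type*} [MetricSpace X] [MeasurableSpace X] [BorelSpace X]
    (hX : ∃ μ : Measure X, (∀ z : X, μ {z} = 0) ∧ 0 < μ Set.univ)
    (F : ℕ → X → X) (f : X → X)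
    (hF : ∀ n, UniformContinuous (F n)) (hf : UniformContinuous f)
    (hpwoc : ∀ x : X, ∀ k : ℕ, 1 ≤ k → ∀ ε : ℝ, 0 < ε →
      ∃ N : ℕ, 1 ≤ N ∧ ∀ n, N ≤ n → dist ((F n)^[k] x) (f^[k] x) < ε)
    (x : X) :
    (∃ δ : ℝ, 0 < δ ∧ ∀ ν : Measure X, (∀ z : X, ν {z} = 0) →
        ν {y : X | ∀ k : ℕ, dist (f^[k] x) (f^[k] y) ≤ δ} = 0) ↔
    (∃ δ : ℝ, 0 < δ ∧ ∀ ν : Measure X, (∀ z : X, ν {z} = 0) →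
        ν {y : X | ¬ ∃ m : ℕ, 1 ≤ m ∧ ∃ k : ℕ,
            ∀ n, m ≤ n → δ < dist ((F n)^[k] x) ((F n)^[k] y)} = 0) :=
  positively_pointwise_measure_expansive_iff_of_pwoc_general F f hpwoc x
end

section
/- Let (X,d) be a metric space and let f_n (n ∈ ℕ⁺) and f be uniformly continuous self-maps of X with f_n pointwise weak orbitally converging to f. Then f is strongly positively pointwise measure expansive at x ∈ X (i.e. there is δ_x > 0 with ν(Φ^f_{δ_x}(x)) = ν({x}) for every Borel measure ν on X) if and only if there exists δ > 0 such that ν({y ∈ X : ⋃_{m≥1} ⋂_{n≥m} E⁺_x(f_n, y, δ) = ∅}) = ν({x}) for every Borel measure ν on X. -/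
open MeasureTheory

/-- Pointwise weak orbital convergence and strongly positively pointwise
measure expansive points. `f` is strongly positively pointwise measure expansive at `x`
iff there is `δ > 0` with `ν({y : ⋃_{m≥1} ⋂_{n≥m} E⁺_x(f_n, y, δ) = ∅}) = ν({x})`
for every Borel measure `ν`. -/
theorem strongly_positively_pointwise_measure_expansive_iff_of_pwoc
    {X : Type*} [MetricSpace X] [MeasurableSpace X] [BorelSpace X]
    (F : ℕ → X → X) (f : X → X)
    (hF : ∀ n, UniformContinuous (F n)) (hf : UniformContinuous f)
    (hpwoc : ∀ x : X, ∀ k : ℕ, 1 ≤ k → ∀ ε : ℝ, 0 < ε →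
      ∃ N : ℕ, 1 ≤ N ∧ ∀ n, N ≤ n → dist ((F n)^[k] x) (f^[k] x) < ε)
    (x : X) :
    (∃ δ : ℝ, 0 < δ ∧ ∀ ν : Measure X,
        ν {y : X | ∀ k : ℕ, dist (f^[k] x) (f^[k] y) ≤ δ} = ν {x}) ↔
    (∃ δ : ℝ, 0 < δ ∧ ∀ ν : Measure X,
        ν {y : X | ¬ ∃ m : ℕ, 1 ≤ m ∧ ∃ k : ℕ,
            ∀ n, m ≤ n → δ < dist ((F n)^[k] x) ((F n)^[k] y)} = ν {x}) := by
  -- key inclusion 1 : S δ ⊆ Φ δ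
  have key1 : ∀ δ : ℝ, ∀ y : X,
      (¬ ∃ m : ℕ, 1 ≤ m ∧ ∃ k : ℕ,
        ∀ n, m ≤ n → δ < dist ((F n)^[k] x) ((F n)^[k] y)) →
      ∀ k : ℕ, dist (f^[k] x) (f^[k] y) ≤ δ := by
    intro δ y hy k
    push_neg at hy
    by_contra hgt
    push_neg at hgt
    rcases Nat.eq_zero_or_pos k with hk | hk
    · subst hk
      obtain ⟨n, _, hn⟩ := hy 1 le_rfl 0
      simp only [Function.iterate_zero, id] at hn hgt
      exact absurd hgt (not_lt.mpr hn)
    · set D := dist (f^[k] x) (f^[k] y) with hD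
      have hε : 0 < (D - δ) / 2 := by linarith
      obtain ⟨Nx, hNx1, hNx⟩ := hpwoc x k hk ((D - δ) / 2) hε
      obtain ⟨Ny, hNy1, hNy⟩ := hpwoc y k hk ((D - δ) / 2) hε
      obtain ⟨n, hn, hnle⟩ := hy (max Nx Ny) (le_trans hNx1 (le_max_left _ _)) k
      have h1 := hNx n (le_trans (le_max_left _ _) hn)
      have h2 := hNy n (le_trans (le_max_right _ _) hn)
      have : D ≤ dist ((F n)^[k] x) (f^[k] x) + dist ((F n)^[k] x) ((F n)^[k] y)
          + dist ((F n)^[k] y) (f^[k] y) := by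
        calc D ≤ dist (f^[k] x) ((F n)^[k] y) + dist ((F n)^[k] y) (f^[k] y) :=
              dist_triangle _ _ _
          _ ≤ (dist (f^[k] x) ((F n)^[k] x) + dist ((F n)^[k] x) ((F n)^[k] y))
              + dist ((F n)^[k] y) (f^[k] y) := by
              gcongr; exact dist_triangle _ _ _
          _ = _ := by rw [dist_comm (f^[k] x)]
      linarith
  -- key inclusion 2 : Φ (δ/2) ⊆ S δ
  have key2 : ∀ δ : ℝ, 0 < δ → ∀ y : X,
      (∀ k : ℕ, dist (f^[k] x) (f^[k] y) ≤ δ / 2) →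
      ¬ ∃ m : ℕ, 1 ≤ m ∧ ∃ k : ℕ,
        ∀ n, m ≤ n → δ < dist ((F n)^[k] x) ((F n)^[k] y) := by
    rintro δ hδ y hy ⟨m, hm, k, hk⟩
    rcases Nat.eq_zero_or_pos k with h0 | hkpos
    · subst h0
      have := hk m le_rfl
      have := hy 0
      simp only [Function.iterate_zero, id] at *
      linarith
    · have hε : 0 < δ / 4 := by linarith
      obtain ⟨Nx, _, hNx⟩ := hpwoc x k hkpos (δ / 4) hε
      obtain ⟨Ny, _, hNy⟩ := hpwoc y k hkpos (δ / 4) hε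
      set n := max m (max Nx Ny) with hn
      have h1 := hNx n (le_trans (le_max_left _ _) (le_max_right _ _))
      have h2 := hNy n (le_trans (le_max_right _ _) (le_max_right _ _))
      have h3 := hk n (le_max_left _ _)
      have h4 := hy k
      have : dist ((F n)^[k] x) ((F n)^[k] y) ≤ dist ((F n)^[k] x) (f^[k] x)
          + dist (f^[k] x) (f^[k] y) + dist (f^[k] y) ((F n)^[k] y) := by
        calc dist ((F n)^[k] x) ((F n)^[k] y)
            ≤ dist ((F n)^[k] x) (f^[k] y) + dist (f^[k] y) ((F n)^[k] y) :=
              dist_triangle _ _ _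
          _ ≤ (dist ((F n)^[k] x) (f^[k] x) + dist (f^[k] x) (f^[k] y))
              + dist (f^[k] y) ((F n)^[k] y) := by gcongr; exact dist_triangle _ _ _
      rw [dist_comm (f^[k] y) ((F n)^[k] y)] at this
      linarith
  constructor
  · rintro ⟨δ, hδ, hΦ⟩
    refine ⟨δ, hδ, fun ν => le_antisymm ?_ ?_⟩
    · calc ν {y : X | ¬ ∃ m : ℕ, 1 ≤ m ∧ ∃ k : ℕ,
            ∀ n, m ≤ n → δ < dist ((F n)^[k] x) ((F n)^[k] y)}
          ≤ ν {y : X | ∀ k : ℕ, dist (f^[k] x) (f^[k] y) ≤ δ} :=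
            measure_mono (fun y hy => key1 δ y hy)
        _ = ν {x} := hΦ ν
    · refine measure_mono ?_
      rintro y rfl
      rintro ⟨m, hm, k, hk⟩
      have := hk m le_rfl
      simp at this
      linarith
  · rintro ⟨δ, hδ, hS⟩
    refine ⟨δ / 2, by linarith, fun ν => le_antisymm ?_ ?_⟩
    · calc ν {y : X | ∀ k : ℕ, dist (f^[k] x) (f^[k] y) ≤ δ / 2}
          ≤ ν {y : X | ¬ ∃ m : ℕ, 1 ≤ m ∧ ∃ k : ℕ,
            ∀ n, m ≤ n → δ < dist ((F n)^[k] x) ((F n)^[k] y)} :=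
            measure_mono (fun y hy => key2 δ hδ y hy)
        _ = ν {x} := hS ν
    · refine measure_mono ?_
      rintro y rfl k
      simp
      linarith
end

section
/- Let (X,d) be a metric space, let f_n (n ∈ ℕ⁺) and f be uniform equivalences of X such that f_n pointwise weak orbitally converges to f and f_n⁻¹ pointwise weak orbitally converges to f⁻¹, and let μ be a non-atomic Borel measure on X with μ(X) > 0. Then μ is pointwise expansive for f at x ∈ X if and only if there exists δ > 0 such that μ({y ∈ X : ⋃_{m≥1} ⋂_{n≥m} E_x(f_n, y, δ) = ∅}) = 0. -/
open MeasureTheory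

/-- Pointwise weak orbital convergence (of the uniform equivalences and
their inverses) and pointwise expansive measures. The non-atomic Borel measure `μ` is
pointwise expansive for `f` at `x` iff there is `δ > 0` with
`μ({y : ⋃_{m≥1} ⋂_{n≥m} E_x(f_n, y, δ)} = ∅) = 0`. -/
theorem pointwise_expansive_measure_iff_of_pwoc
    {X : Type*} [MetricSpace X] [MeasurableSpace X] [BorelSpace X]
    (F : ℕ → Equiv.Perm X) (f : Equiv.Perm X)
    (hF : ∀ n, UniformContinuous (F n)) (hF' : ∀ n, UniformContinuous (F n).symm)
    (hf : UniformContinuous f) (hf' : UniformContinuous f.symm)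
    (hpwoc : ∀ x : X, ∀ k : ℕ, 1 ≤ k → ∀ ε : ℝ, 0 < ε →
      ∃ N : ℕ, 1 ≤ N ∧ ∀ n, N ≤ n → dist ((F n ^ k) x) ((f ^ k) x) < ε)
    (hpwoc' : ∀ x : X, ∀ k : ℕ, 1 ≤ k → ∀ ε : ℝ, 0 < ε →
      ∃ N : ℕ, 1 ≤ N ∧ ∀ n, N ≤ n → dist (((F n)⁻¹ ^ k) x) ((f⁻¹ ^ k) x) < ε)
    (μ : Measure X) (hμna : ∀ z : X, μ {z} = 0) (hμnt : 0 < μ Set.univ)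
    (x : X) :
    (∃ δ : ℝ, 0 < δ ∧
        μ {y : X | ∀ k : ℤ, dist ((f ^ k) x) ((f ^ k) y) ≤ δ} = 0) ↔
    (∃ δ : ℝ, 0 < δ ∧
        μ {y : X | ¬ ∃ m : ℕ, 1 ≤ m ∧ ∃ k : ℤ,
            ∀ n, m ≤ n → δ < dist ((F n ^ k) x) ((F n ^ k) y)} = 0) := by
  have conv : ∀ z : X, ∀ k : ℤ, ∀ ε : ℝ, 0 < ε →
      ∃ N : ℕ, ∀ n, N ≤ n → dist ((F n ^ k) z) ((f ^ k) z) < ε := by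
    intro z k ε hε
    match k with
    | Int.ofNat 0 => exact ⟨0, fun n _ => by simpa using hε⟩
    | Int.ofNat (m + 1) =>
        obtain ⟨N, _, hN⟩ := hpwoc z (m + 1) (Nat.le_add_left 1 m) ε hε
        refine ⟨N, fun n hn => ?_⟩
        have h := hN n hn
        have e1 : (F n ^ (Int.ofNat (m + 1)) : Equiv.Perm X) = F n ^ (m + 1) := by
          rw [Int.ofNat_eq_coe, zpow_natCast]
        have e2 : (f ^ (Int.ofNat (m + 1)) : Equiv.Perm X) = f ^ (m + 1) := by
          rw [Int.ofNat_eq_coe, zpow_natCast]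
        rw [e1, e2]; exact h
    | Int.negSucc m =>
        obtain ⟨N, _, hN⟩ := hpwoc' z (m + 1) (Nat.le_add_left 1 m) ε hε
        refine ⟨N, fun n hn => ?_⟩
        have h := hN n hn
        have e1 : (F n ^ (Int.negSucc m) : Equiv.Perm X) = (F n)⁻¹ ^ (m + 1) := by
          rw [zpow_negSucc, inv_pow]
        have e2 : (f ^ (Int.negSucc m) : Equiv.Perm X) = f⁻¹ ^ (m + 1) := by
          rw [zpow_negSucc, inv_pow]
        rw [e1, e2]; exact h
  constructor
  · rintro ⟨δ, hδ, hμ⟩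
    refine ⟨δ, hδ, measure_mono_null ?_ hμ⟩
    intro y hy
    simp only [Set.mem_setOf_eq] at hy ⊢
    intro k
    by_contra hk
    push_neg at hk
    have hεpos : 0 < (dist ((f ^ k) x) ((f ^ k) y) - δ) / 2 := by linarith
    obtain ⟨N1, h1⟩ := conv x k _ hεpos
    obtain ⟨N2, h2⟩ := conv y k _ hεpos
    apply hy
    refine ⟨max N1 N2 + 1, le_add_self, k, fun n hn => ?_⟩
    have ha := h1 n (by omega)
    have hb := h2 n (by omega)
    have ht := dist_triangle4 ((f ^ k) x) ((F n ^ k) x) ((F n ^ k) y) ((f ^ k) y)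
    have hc : dist ((f ^ k) x) ((F n ^ k) x) = dist ((F n ^ k) x) ((f ^ k) x) :=
      dist_comm _ _
    have hd : dist ((F n ^ k) y) ((f ^ k) y) = dist ((F n ^ k) y) ((f ^ k) y) := rfl
    linarith
  · rintro ⟨δ, hδ, hμ⟩
    refine ⟨δ / 2, by linarith, measure_mono_null ?_ hμ⟩
    intro y hy
    simp only [Set.mem_setOf_eq] at hy ⊢
    rintro ⟨m, hm, k, hk⟩
    have hεpos : (0 : ℝ) < δ / 8 := by linarith
    obtain ⟨N1, h1⟩ := conv x k _ hεpos
    obtain ⟨N2, h2⟩ := conv y k _ hεpos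
    set n := max m (max N1 N2) with hn
    have ha := h1 n (by omega)
    have hb := h2 n (by omega)
    have hdk := hk n (le_max_left _ _)
    have hy' := hy k
    have ht := dist_triangle4 ((F n ^ k) x) ((f ^ k) x) ((f ^ k) y) ((F n ^ k) y)
    have hc : dist ((f ^ k) y) ((F n ^ k) y) = dist ((F n ^ k) y) ((f ^ k) y) :=
      dist_comm _ _
    linarith
end

section
/- Let (X,d) be a metric space and let f_n (n ∈ ℕ⁺) and f be uniformly continuous self-maps of X such that f_n orbitally converges to f. Then a point x ∈ X is a positive shadowable point of f if and only if for every ε > 0 there exist δ > 0 and m ∈ ℕ⁺ such that for every n ≥ m, every δ-pseudo orbit through x for f_n is ε-traced through f_n by some point of X (i.e. ⋃_{m≥1} ⋂_{n≥m} Sh⁺(f_n, x, ε) ≠ ∅ for every ε > 0). -/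
/-- Orbital convergence and positive shadowable points.
`x` is a positive shadowable point of `f` iff for every `ε > 0` the set
`⋃_{m≥1} ⋂_{n≥m} Sh⁺(f_n, x, ε)` is nonempty. -/
theorem positive_shadowable_point_iff_of_oc
    {X : Type*} [MetricSpace X] (F : ℕ → X → X) (f : X → X)
    (hF : ∀ n, UniformContinuous (F n)) (hf : UniformContinuous f)
    (hoc : ∀ ε : ℝ, 0 < ε → ∃ N : ℕ, 1 ≤ N ∧ ∀ n, N ≤ n → ∀ x : X, ∀ k : ℕ,
      1 ≤ k → dist ((F n)^[k] x) (f^[k] x) < ε)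
    (x : X) :
    (∀ ε : ℝ, 0 < ε → ∃ δ : ℝ, 0 < δ ∧ ∀ ρ : ℕ → X, ρ 0 = x →
        (∀ i : ℕ, dist (f (ρ i)) (ρ (i + 1)) < δ) →
        ∃ y : X, ∀ i : ℕ, dist (f^[i] y) (ρ i) < ε) ↔
    (∀ ε : ℝ, 0 < ε → ∃ m : ℕ, 1 ≤ m ∧ ∃ δ : ℝ, 0 < δ ∧
        ∀ n, m ≤ n → ∀ ρ : ℕ → X, ρ 0 = x →
          (∀ i : ℕ, dist (F n (ρ i)) (ρ (i + 1)) < δ) →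
          ∃ y : X, ∀ i : ℕ, dist ((F n)^[i] y) (ρ i) < ε) := by
  constructor
  · intro h ε hε
    obtain ⟨δ, hδ, hsh⟩ := h (ε/3) (by linarith)
    obtain ⟨N, hN1, hN⟩ := hoc (min (ε/3) (δ/2)) (lt_min (by linarith) (by linarith))
    refine ⟨N, hN1, δ/2, by linarith, ?_⟩
    intro n hn ρ hρ0 hρ
    have hpseudo : ∀ i, dist (f (ρ i)) (ρ (i+1)) < δ := by
      intro i
      have h1 := hN n hn (ρ i) 1 le_rfl
      simp only [Function.iterate_one] at h1
      have h1' : dist (f (ρ i)) (F n (ρ i)) < min (ε/3) (δ/2) := by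
        rw [dist_comm]; exact h1
      have h2 := hρ i
      have h3 := dist_triangle (f (ρ i)) (F n (ρ i)) (ρ (i+1))
      have hm : (min (ε/3) (δ/2)) ≤ δ/2 := min_le_right _ _
      linarith [lt_of_lt_of_le h1' hm]
    obtain ⟨y, hy⟩ := hsh ρ hρ0 hpseudo
    refine ⟨y, fun i => ?_⟩
    rcases Nat.eq_zero_or_pos i with hi | hi
    · subst hi; have := hy 0; simp only [Function.iterate_zero, id] at this ⊢; linarith
    · have h1 := hN n hn y i hi
      have h2 := hy i
      have h3 := dist_triangle ((F n)^[i] y) (f^[i] y) (ρ i)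
      have hm : (min (ε/3) (δ/2)) ≤ ε/3 := min_le_left _ _
      linarith [lt_of_lt_of_le h1 hm]
  · intro h ε hε
    obtain ⟨m, hm1, δ₀, hδ₀, hsh⟩ := h (ε/3) (by linarith)
    obtain ⟨N, hN1, hN⟩ := hoc (min (ε/3) (δ₀/2)) (lt_min (by linarith) (by linarith))
    set n := max m N with hn_def
    have hnm : m ≤ n := le_max_left _ _
    have hnN : N ≤ n := le_max_right _ _
    refine ⟨δ₀/2, by linarith, ?_⟩
    intro ρ hρ0 hρ
    have hpseudo : ∀ i, dist (F n (ρ i)) (ρ (i+1)) < δ₀ := by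
      intro i
      have h1 := hN n hnN (ρ i) 1 le_rfl
      simp only [Function.iterate_one] at h1
      have h2 := hρ i
      have h3 := dist_triangle (F n (ρ i)) (f (ρ i)) (ρ (i+1))
      have hm2 : (min (ε/3) (δ₀/2)) ≤ δ₀/2 := min_le_right _ _
      linarith [lt_of_lt_of_le h1 hm2]
    obtain ⟨y, hy⟩ := hsh n hnm ρ hρ0 hpseudo
    refine ⟨y, fun i => ?_⟩
    rcases Nat.eq_zero_or_pos i with hi | hi
    · subst hi; have := hy 0; simp only [Function.iterate_zero, id] at this ⊢; linarith
    · have h1 := hN n hnN y i hi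
      have h2 := hy i
      have hm2 : (min (ε/3) (δ₀/2)) ≤ ε/3 := min_le_left _ _
      have h1' : dist (f^[i] y) ((F n)^[i] y) < ε/3 := by
        rw [dist_comm]; exact lt_of_lt_of_le h1 hm2
      linarith [dist_triangle (f^[i] y) ((F n)^[i] y) (ρ i)]
end

section
/- Let (X,d) be a metric space and let f_n (n ∈ ℕ⁺) and f be uniformly continuous self-maps of X such that f_n orbitally converges to f. Then a point x ∈ X is a specification point of f if and only if for every ε > 0 there exist M ∈ ℕ⁺ and m ∈ ℕ⁺ such that M ∈ Sp(f_n, x, ε) for all n ≥ m (i.e. ⋃_{m≥1} ⋂_{n≥m} Sp(f_n, x, ε) ≠ ∅ for every ε > 0). -/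
/-- `M` witnesses the specification property of `f` at `x` for tolerance `ε`:
for any finite sequence `x = xs 0, xs 1, …, xs (k-1)` in `X` and integers
`0 ≤ a 0 ≤ b 0 < a 1 ≤ b 1 < … < a (k-1) ≤ b (k-1)` with `a j - b (j-1) ≥ M`,
there is `y ∈ X` with `dist (f^[i] y) (f^[i] (xs j)) < ε` for all `a j ≤ i ≤ b j`. -/
def SpecWitness {X : Type*} [MetricSpace X] (f : X → X) (x : X) (ε : ℝ) (M : ℕ) : Prop :=
  ∀ (k : ℕ), 1 ≤ k → ∀ (xs : ℕ → X), xs 0 = x →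
    ∀ (a b : ℕ → ℕ), (∀ j, j < k → a j ≤ b j) →
      (∀ j, j + 1 < k → b j < a (j + 1) ∧ M ≤ a (j + 1) - b j) →
      ∃ y : X, ∀ j, j < k → ∀ i, a j ≤ i → i ≤ b j →
        dist (f^[i] y) (f^[i] (xs j)) < ε


lemma spec_transfer {X : Type*} [MetricSpace X] (g h : X → X) (x : X) (ε : ℝ)
    (hε : 0 < ε) (M : ℕ)
    (hd : ∀ z : X, ∀ k : ℕ, 1 ≤ k → dist (g^[k] z) (h^[k] z) < ε / 4)
    (hg : SpecWitness g x (ε / 2) M) : SpecWitness h x ε M := by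
  intro k hk xs hxs a b hab hgap
  obtain ⟨y, hy⟩ := hg k hk xs hxs a b hab hgap
  refine ⟨y, fun j hj i hai hbi => ?_⟩
  have h1 := hy j hj i hai hbi
  rcases Nat.eq_zero_or_pos i with hi | hi
  · subst hi
    simp only [Function.iterate_zero, id_eq] at h1 ⊢
    have : dist y (xs j) < ε / 2 := by
      simpa using h1
    linarith
  · have h2 := hd y i hi
    have h3 := hd (xs j) i hi
    calc dist (h^[i] y) (h^[i] (xs j))
        ≤ dist (h^[i] y) (g^[i] y) + dist (g^[i] y) (g^[i] (xs j))
            + dist (g^[i] (xs j)) (h^[i] (xs j)) := dist_triangle4 _ _ _ _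
      _ < ε / 4 + ε / 2 + ε / 4 := by
          rw [dist_comm (h^[i] y)]
          exact add_lt_add (add_lt_add h2 h1) h3
      _ = ε := by ring

/-- Orbital convergence and specification points.
`x` is a specification point of `f` iff for every `ε > 0` the set
`⋃_{m≥1} ⋂_{n≥m} Sp(f_n, x, ε)` is nonempty. -/
theorem specification_point_iff_of_oc
    {X : Type*} [MetricSpace X] (F : ℕ → X → X) (f : X → X)
    (hF : ∀ n, UniformContinuous (F n)) (hf : UniformContinuous f)
    (hoc : ∀ ε : ℝ, 0 < ε → ∃ N : ℕ, 1 ≤ N ∧ ∀ n, N ≤ n → ∀ x : X, ∀ k : ℕ,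
      1 ≤ k → dist ((F n)^[k] x) (f^[k] x) < ε)
    (x : X) :
    (∀ ε : ℝ, 0 < ε → ∃ M : ℕ, 1 ≤ M ∧ SpecWitness f x ε M) ↔
    (∀ ε : ℝ, 0 < ε → ∃ M : ℕ, 1 ≤ M ∧ ∃ m : ℕ, 1 ≤ m ∧
        ∀ n, m ≤ n → SpecWitness (F n) x ε M) := by
  constructor
  · intro H ε hε
    obtain ⟨M, hM, hspec⟩ := H (ε / 2) (by linarith)
    obtain ⟨N, hN, hNc⟩ := hoc (ε / 4) (by linarith)
    refine ⟨M, hM, N, hN, fun n hn => ?_⟩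
    exact spec_transfer f (F n) x ε hε M
      (fun z k hk => by rw [dist_comm]; exact hNc n hn z k hk) hspec
  · intro H ε hε
    obtain ⟨M, hM, m, hm, hspec⟩ := H (ε / 2) (by linarith)
    obtain ⟨N, hN, hNc⟩ := hoc (ε / 4) (by linarith)
    refine ⟨M, hM, ?_⟩
    exact spec_transfer (F (max m N)) f x ε hε M
      (fun z k hk => hNc _ (le_max_right _ _) z k hk)
      (hspec _ (le_max_left _ _))
end

section
/- Let (X,d) be a Mandelkern locally compact metric space (every closed ball of finite radius in X is compact) and let f be a uniform equivalence of X that is expansive. Then for every x ∈ X the following are equivalent: (i) x is a topologically stable point of f; (ii) x is a weak topologically stable point of f; (iii) x is an α-persistent point of f. -/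
open Metric

/-- `g` is a uniform equivalence: both `g` and `g⁻¹` are uniformly continuous. -/
def IsUniformEquiv {X : Type*} [MetricSpace X] (g : Equiv.Perm X) : Prop :=
  UniformContinuous g ∧ UniformContinuous g.symm

/-- The `C⁰`-distance `D(f,g) = sup_x min(d(f x, g x), 1)`. -/
noncomputable def C0Dist {X : Type*} [MetricSpace X] (f g : X → X) : ℝ :=
  ⨆ x : X, min (dist (f x) (g x)) 1

/-- The closure of the full `g`-orbit of `x`. -/
def OrbitClosure {X : Type*} [MetricSpace X] (g : Equiv.Perm X) (x : X) : Set X :=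
  closure (Set.range fun n : ℤ => (g ^ n) x)

/-- `x` is a topologically stable point of `f`. -/
def IsTopStablePt {X : Type*} [MetricSpace X] (f : Equiv.Perm X) (x : X) : Prop :=
  ∀ ε : ℝ, 0 < ε → ∃ δ : ℝ, 0 < δ ∧
    ∀ g : Equiv.Perm X, IsUniformEquiv g → C0Dist f g < δ →
      ∃ h : OrbitClosure g x → X, Continuous h ∧
        (∀ (y : X) (hy : y ∈ OrbitClosure g x) (hgy : g y ∈ OrbitClosure g x),
          f (h ⟨y, hy⟩) = h ⟨g y, hgy⟩) ∧
        (∀ y : OrbitClosure g x, dist (h y) (y : X) < ε)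

/-- `x` is a weak topologically stable point of `f`. -/
def IsWeakTopStablePt {X : Type*} [MetricSpace X] (f : Equiv.Perm X) (x : X) : Prop :=
  ∀ ε : ℝ, 0 < ε → ∃ δ : ℝ, 0 < δ ∧
    ∀ g : Equiv.Perm X, IsUniformEquiv g → C0Dist f g < δ →
      ∃ h : OrbitClosure g x → X, Continuous h ∧
        (∀ (y : OrbitClosure g x) (n : ℤ),
          dist ((f ^ n) (h y)) ((g ^ n) (y : X)) < ε) ∧
        (∀ y : OrbitClosure g x, dist (h y) (y : X) < ε)

/-- `x` is an `α`-persistent point of `f`. -/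
def IsAlphaPersistentPt {X : Type*} [MetricSpace X] (f : Equiv.Perm X) (x : X) : Prop :=
  ∀ ε : ℝ, 0 < ε → ∃ δ : ℝ, 0 < δ ∧
    ∀ g : Equiv.Perm X, IsUniformEquiv g → C0Dist f g < δ →
      ∃ y : X, ∀ n : ℤ, dist ((f ^ n) y) ((g ^ n) x) < ε

/-! Topological stability gives weak topological stability by iterating the conjugacy, and
weak topological stability gives α-persistence by evaluating `h` at `x`. Conversely, let `y`
shadow the `g`-orbit of `x` within `ε`; then `f^m y` shadows the orbit of `g^m x`. Since the
shadowing relation is closed and bounded sequences in `X` have convergent subsequences, every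
point of the orbit closure has a shadow. When `2ε` is below an expansivity constant, shadows
are unique; uniqueness makes the shadow map commute with `f` and `g`, and, together with
compactness, makes it continuous. -/

open Filter Topology

theorem Equiv.Perm.continuous_zpow {α : Type*} [TopologicalSpace α] {g : Equiv.Perm α}
    (hg : Continuous g) (hg' : Continuous g.symm) : ∀ n : ℤ, Continuous ⇑(g ^ n)
  | .ofNat n => by rw [Int.ofNat_eq_natCast, zpow_natCast, Equiv.Perm.coe_pow]; exact hg.iterate n
  | .negSucc n => by rw [zpow_negSucc, ← inv_pow, Equiv.Perm.coe_pow]; exact hg'.iterate _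

theorem Function.Semiconj.perm_zpow {α β : Type*} {h : α → β} {a : Equiv.Perm α}
    {b : Equiv.Perm β} (hab : Function.Semiconj h a b) :
    ∀ n : ℤ, Function.Semiconj h ⇑(a ^ n) ⇑(b ^ n)
  | .ofNat n => by
    simpa only [Int.ofNat_eq_natCast, zpow_natCast, Equiv.Perm.coe_pow] using hab.iterate_right n
  | .negSucc n => by
    rw [zpow_negSucc, zpow_negSucc, ← inv_pow, ← inv_pow, Equiv.Perm.coe_pow, Equiv.Perm.coe_pow]
    exact (hab.inverses_right a.apply_symm_apply b.symm_apply_apply).iterate_right _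

section

variable {X : Type*} [MetricSpace X]

theorem IsUniformEquiv.continuous_zpow {g : Equiv.Perm X} (hg : IsUniformEquiv g) (n : ℤ) :
    Continuous ⇑(g ^ n) :=
  Equiv.Perm.continuous_zpow hg.1.continuous hg.2.continuous n

theorem mem_orbitClosure_self (g : Equiv.Perm X) (x : X) : x ∈ OrbitClosure g x :=
  subset_closure ⟨0, rfl⟩

theorem mapsTo_zpow_orbitClosure {g : Equiv.Perm X} {m : ℤ} (hgm : Continuous ⇑(g ^ m))
    (x : X) : Set.MapsTo ⇑(g ^ m) (OrbitClosure g x) (OrbitClosure g x) :=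
  Set.MapsTo.closure
    (by rintro _ ⟨n, rfl⟩; exact ⟨m + n, by dsimp only; rw [zpow_add, Equiv.Perm.mul_apply]⟩) hgm

theorem IsUniformEquiv.apply_mem_orbitClosure_iff {g : Equiv.Perm X} (hg : IsUniformEquiv g)
    (x y : X) : g y ∈ OrbitClosure g x ↔ y ∈ OrbitClosure g x :=
  ⟨fun hy => by simpa using mapsTo_zpow_orbitClosure (hg.continuous_zpow (-1)) x hy,
   fun hy => by simpa using mapsTo_zpow_orbitClosure (hg.continuous_zpow 1) x hy⟩

theorem IsTopStablePt.isWeakTopStablePt {f : Equiv.Perm X} {x : X} (hS : IsTopStablePt f x) :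
    IsWeakTopStablePt f x := by
  intro ε hε
  obtain ⟨δ, hδ, hS⟩ := hS ε hε
  refine ⟨δ, hδ, fun g hg hgf => ?_⟩
  obtain ⟨h, hcont, hconj, hclose⟩ := hS g hg hgf
  set gS := g.subtypePerm (hg.apply_mem_orbitClosure_iff x)
  have hsemi : Function.Semiconj h gS f := fun y => (hconj y y.2 _).symm
  refine ⟨h, hcont, fun y n => ?_, hclose⟩
  rw [← hsemi.perm_zpow n y]
  simpa [gS] using hclose ((gS ^ n) y)

theorem IsWeakTopStablePt.isAlphaPersistentPt {f : Equiv.Perm X} {x : X}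
    (hW : IsWeakTopStablePt f x) : IsAlphaPersistentPt f x := by
  intro ε hε
  obtain ⟨δ, hδ, hW⟩ := hW ε hε
  refine ⟨δ, hδ, fun g hg hgf => ?_⟩
  obtain ⟨h, -, htrace, -⟩ := hW g hg hgf
  exact ⟨h ⟨x, mem_orbitClosure_self g x⟩, htrace _⟩

def HasExpansivityConstant (f : Equiv.Perm X) (c : ℝ) : Prop :=
  ∀ x y : X, x ≠ y → ∃ n : ℤ, c < dist ((f ^ n) x) ((f ^ n) y)

def Shadows (f g : Equiv.Perm X) (ε : ℝ) (w z : X) : Prop :=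
  ∀ n : ℤ, dist ((f ^ n) w) ((g ^ n) z) ≤ ε

namespace Shadows

variable {f g : Equiv.Perm X} {ε : ℝ} {w z : X}

theorem dist_le (h : Shadows f g ε w z) : dist w z ≤ ε := by
  simpa using h 0

theorem zpow (h : Shadows f g ε w z) (m : ℤ) : Shadows f g ε ((f ^ m) w) ((g ^ m) z) :=
  fun n => by simpa only [zpow_add, Equiv.Perm.mul_apply] using h (n + m)

theorem apply (h : Shadows f g ε w z) : Shadows f g ε (f w) (g z) := by
  simpa only [zpow_one] using h.zpow 1

theorem eq {c : ℝ} (hf : HasExpansivityConstant f c) (hεc : 2 * ε < c) {w' : X}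
    (h : Shadows f g ε w z) (h' : Shadows f g ε w' z) : w = w' := by
  by_contra hne
  obtain ⟨n, hn⟩ := hf w w' hne
  linarith [h n, h' n, dist_triangle_right ((f ^ n) w) ((f ^ n) w') ((g ^ n) z)]

theorem isClosed_setOf (hf : ∀ n : ℤ, Continuous ⇑(f ^ n)) (hg : ∀ n : ℤ, Continuous ⇑(g ^ n)) :
    IsClosed {p : X × X | Shadows f g ε p.1 p.2} := by
  simp only [Shadows, Set.ofPred_forall]
  exact isClosed_iInter fun n =>
    isClosed_le (((hf n).comp continuous_fst).dist ((hg n).comp continuous_snd)) continuous_const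

theorem exists_tendsto_subseq [ProperSpace X] (hf : ∀ n : ℤ, Continuous ⇑(f ^ n))
    (hg : ∀ n : ℤ, Continuous ⇑(g ^ n)) {ws zs : ℕ → X} (hz : Tendsto zs atTop (𝓝 z))
    (h : ∀ k, Shadows f g ε (ws k) (zs k)) :
    ∃ w, Shadows f g ε w z ∧ ∃ φ : ℕ → ℕ, Tendsto (ws ∘ φ) atTop (𝓝 w) := by
  have hbdd : Bornology.IsBounded (Set.range ws) := by
    obtain ⟨C, hC⟩ := Metric.isBounded_range_iff.1 (Metric.isBounded_range_of_tendsto zs hz)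
    refine Metric.isBounded_range_iff.2 ⟨ε + C + ε, fun k l => ?_⟩
    linarith [(h k).dist_le, (h l).dist_le, dist_comm (ws l) (zs l), hC k l,
      dist_triangle4 (ws k) (zs k) (zs l) (ws l)]
  obtain ⟨w, -, φ, hφ, hw⟩ := tendsto_subseq_of_bounded hbdd Set.mem_range_self
  exact ⟨w, (isClosed_setOf hf hg).mem_of_tendsto (hw.prodMk_nhds (hz.comp hφ.tendsto_atTop))
    (Eventually.of_forall fun k => h (φ k)), φ, hw⟩

theorem exists_of_mem_orbitClosure [ProperSpace X] (hf : ∀ n : ℤ, Continuous ⇑(f ^ n))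
    (hg : ∀ n : ℤ, Continuous ⇑(g ^ n)) {y x : X} (hy : Shadows f g ε y x)
    (hz : z ∈ OrbitClosure g x) : ∃ w, Shadows f g ε w z := by
  obtain ⟨zs, hzs, hlim⟩ := mem_closure_iff_seq_limit.1 hz
  choose ms hms using hzs
  obtain ⟨w, hw, -⟩ := exists_tendsto_subseq hf hg hlim (ws := fun k => (f ^ ms k) y)
    fun k => by rw [← hms k]; exact hy.zpow (ms k)
  exact ⟨w, hw⟩

end Shadows

theorem continuous_of_forall_shadows [ProperSpace X] {f g : Equiv.Perm X} {ε c : ℝ}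
    (hf : ∀ n : ℤ, Continuous ⇑(f ^ n)) (hg : ∀ n : ℤ, Continuous ⇑(g ^ n))
    (hexp : HasExpansivityConstant f c) (hεc : 2 * ε < c) {S : Set X} {h : S → X}
    (hh : ∀ z : S, Shadows f g ε (h z) z) : Continuous h := by
  refine continuous_iff_continuousAt.2 fun a => tendsto_of_subseq_tendsto fun zs hzs => ?_
  obtain ⟨w, hw, φ, hφ⟩ := Shadows.exists_tendsto_subseq hf hg
    ((continuous_subtype_val.tendsto a).comp hzs) fun k => hh (zs k)
  exact ⟨φ, hw.eq hexp hεc (hh a) ▸ hφ⟩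

theorem IsAlphaPersistentPt.isTopStablePt [ProperSpace X] {f : Equiv.Perm X}
    (hf : IsUniformEquiv f) {c : ℝ} (hc : 0 < c) (hexp : HasExpansivityConstant f c) {x : X}
    (hA : IsAlphaPersistentPt f x) : IsTopStablePt f x := by
  intro ε hε
  set η := min (ε / 2) (c / 3)
  have hη : 0 < η := lt_min (by linarith) (by linarith)
  have hηc : 2 * η < c := by linarith [min_le_right (ε / 2) (c / 3)]
  obtain ⟨δ, hδ, hA⟩ := hA η hη
  refine ⟨δ, hδ, fun g hg hgf => ?_⟩
  obtain ⟨y, hy⟩ := hA g hg hgf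
  have hy : Shadows f g η y x := fun n => (hy n).le
  choose h hh using fun z : OrbitClosure g x =>
    hy.exists_of_mem_orbitClosure hf.continuous_zpow hg.continuous_zpow z.2
  refine ⟨h, continuous_of_forall_shadows hf.continuous_zpow hg.continuous_zpow hexp hηc hh,
    fun z hz hgz => (hh ⟨z, hz⟩).apply.eq hexp hηc (hh ⟨g z, hgz⟩), fun z => ?_⟩
  linarith [(hh z).dist_le, min_le_left (ε / 2) (c / 3)]

end

/-- For an expansive uniform equivalence of a Mandelkern locally compact
metric space, topological stability, weak topological stability and `α`-persistence at a
point are equivalent. -/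
theorem topStable_iff_weakTopStable_iff_alphaPersistent
    {X : Type*} [MetricSpace X]
    (hX : ∀ (x : X) (r : ℝ), IsCompact (closedBall x r))
    (f : Equiv.Perm X) (hf : IsUniformEquiv f)
    (hexp : ∃ c : ℝ, 0 < c ∧ ∀ x y : X, x ≠ y →
      ∃ n : ℤ, c < dist ((f ^ n) x) ((f ^ n) y))
    (x : X) :
    (IsTopStablePt f x ↔ IsWeakTopStablePt f x) ∧
    (IsWeakTopStablePt f x ↔ IsAlphaPersistentPt f x) := by
  obtain ⟨c, hc, hexp⟩ := hexp
  have : ProperSpace X := ⟨hX⟩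
  have hSW := IsTopStablePt.isWeakTopStablePt (f := f) (x := x)
  have hWA := IsWeakTopStablePt.isAlphaPersistentPt (f := f) (x := x)
  have hAS := IsAlphaPersistentPt.isTopStablePt (x := x) hf hc hexp
  exact ⟨⟨hSW, hAS ∘ hWA⟩, ⟨hWA, hSW ∘ hAS⟩⟩
end

section
/- Let (X,d) be a metric space and let f_n (n ∈ ℕ⁺) and f be uniform equivalences of X such that f_n orbitally converges to f and f_n⁻¹ orbitally converges to f⁻¹. Then a point x ∈ X is a shadowable point of f if and only if for every ε > 0 there exist δ > 0 and m ∈ ℕ⁺ such that for every n ≥ m, every δ-pseudo orbit {x_i}_{i∈ℤ} through x for f_n is ε-traced through f_n by some point of X (i.e. ⋃_{m≥1} ⋂_{n≥m} Sh(f_n, x, ε) ≠ ∅ for every ε > 0). -/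
private lemma zpow_close_aux {X : Type*} [MetricSpace X] (g h : Equiv.Perm X) (ε : ℝ)
    (hε : 0 < ε)
    (h1 : ∀ y : X, ∀ k : ℕ, 1 ≤ k → dist ((g ^ k) y) ((h ^ k) y) < ε)
    (h2 : ∀ y : X, ∀ k : ℕ, 1 ≤ k → dist ((g⁻¹ ^ k) y) ((h⁻¹ ^ k) y) < ε)
    (y : X) (i : ℤ) : dist ((g ^ i) y) ((h ^ i) y) < ε := by
  rcases lt_trichotomy i 0 with hi | hi | hi
  · have hni : (1 : ℕ) ≤ (-i).toNat := by omega
    have e1 : g ^ i = g⁻¹ ^ (-i).toNat := by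
      rw [← zpow_natCast g⁻¹, inv_zpow']; congr 1; omega
    have e2 : h ^ i = h⁻¹ ^ (-i).toNat := by
      rw [← zpow_natCast h⁻¹, inv_zpow']; congr 1; omega
    rw [e1, e2]; exact h2 y _ hni
  · subst hi; simpa using hε
  · have hni : (1 : ℕ) ≤ i.toNat := by omega
    have e1 : g ^ i = g ^ i.toNat := by rw [← zpow_natCast]; congr 1; omega
    have e2 : h ^ i = h ^ i.toNat := by rw [← zpow_natCast]; congr 1; omega
    rw [e1, e2]; exact h1 y _ hni

/-- Orbital convergence (of the uniform equivalences and of their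
inverses) and shadowable points. `x` is a shadowable point of `f` iff for every
`ε > 0` the set `⋃_{m≥1} ⋂_{n≥m} Sh(f_n, x, ε)` is nonempty. -/
theorem shadowable_point_iff_of_oc
    {X : Type*} [MetricSpace X] (F : ℕ → Equiv.Perm X) (f : Equiv.Perm X)
    (hF : ∀ n, UniformContinuous (F n)) (hF' : ∀ n, UniformContinuous (F n).symm)
    (hf : UniformContinuous f) (hf' : UniformContinuous f.symm)
    (hoc : ∀ ε : ℝ, 0 < ε → ∃ N : ℕ, 1 ≤ N ∧ ∀ n, N ≤ n → ∀ x : X, ∀ k : ℕ,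
      1 ≤ k → dist ((F n ^ k) x) ((f ^ k) x) < ε)
    (hoc' : ∀ ε : ℝ, 0 < ε → ∃ N : ℕ, 1 ≤ N ∧ ∀ n, N ≤ n → ∀ x : X, ∀ k : ℕ,
      1 ≤ k → dist (((F n)⁻¹ ^ k) x) ((f⁻¹ ^ k) x) < ε)
    (x : X) :
    (∀ ε : ℝ, 0 < ε → ∃ δ : ℝ, 0 < δ ∧ ∀ ρ : ℤ → X, ρ 0 = x →
        (∀ i : ℤ, dist (f (ρ i)) (ρ (i + 1)) < δ) →
        ∃ y : X, ∀ i : ℤ, dist ((f ^ i) y) (ρ i) < ε) ↔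
    (∀ ε : ℝ, 0 < ε → ∃ m : ℕ, 1 ≤ m ∧ ∃ δ : ℝ, 0 < δ ∧
        ∀ n, m ≤ n → ∀ ρ : ℤ → X, ρ 0 = x →
          (∀ i : ℤ, dist (F n (ρ i)) (ρ (i + 1)) < δ) →
          ∃ y : X, ∀ i : ℤ, dist ((F n ^ i) y) (ρ i) < ε) := by
  constructor
  · intro hsh ε hε
    have hε3 : (0:ℝ) < ε / 3 := by linarith
    obtain ⟨δ, hδ, hshad⟩ := hsh (ε/3) hε3
    have hmin : (0:ℝ) < min (δ/2) (ε/3) := lt_min (by linarith) hε3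
    obtain ⟨N1, hN1, h1⟩ := hoc (min (δ/2) (ε/3)) hmin
    obtain ⟨N2, hN2, h2⟩ := hoc' (ε/3) hε3
    refine ⟨max N1 N2, le_trans hN1 (le_max_left _ _), δ/2, by linarith, ?_⟩
    intro n hn ρ hρ0 hρ
    have hnN1 : N1 ≤ n := le_trans (le_max_left _ _) hn
    have hnN2 : N2 ≤ n := le_trans (le_max_right _ _) hn
    have hclose : ∀ y : X, dist (F n y) (f y) < δ / 2 := by
      intro y
      have := h1 n hnN1 y 1 le_rfl
      simp only [pow_one] at this
      exact this.trans_le (min_le_left _ _)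
    have hfpo : ∀ i : ℤ, dist (f (ρ i)) (ρ (i + 1)) < δ := by
      intro i
      calc dist (f (ρ i)) (ρ (i + 1))
          ≤ dist (f (ρ i)) (F n (ρ i)) + dist (F n (ρ i)) (ρ (i + 1)) := dist_triangle _ _ _
        _ < δ / 2 + δ / 2 := by
            have := hclose (ρ i)
            rw [dist_comm] at this
            exact add_lt_add this (hρ i)
        _ = δ := by ring
    obtain ⟨y, hy⟩ := hshad ρ hρ0 hfpo
    refine ⟨y, fun i => ?_⟩
    have hz : dist ((F n ^ i) y) ((f ^ i) y) < ε / 3 :=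
      zpow_close_aux (F n) f (ε/3) hε3
        (fun z k hk => (h1 n hnN1 z k hk).trans_le (min_le_right _ _))
        (fun z k hk => h2 n hnN2 z k hk) y i
    calc dist ((F n ^ i) y) (ρ i)
        ≤ dist ((F n ^ i) y) ((f ^ i) y) + dist ((f ^ i) y) (ρ i) := dist_triangle _ _ _
      _ < ε / 3 + ε / 3 := add_lt_add hz (hy i)
      _ < ε := by linarith
  · intro hsh ε hε
    have hε3 : (0:ℝ) < ε / 3 := by linarith
    obtain ⟨m, hm, δ, hδ, hshad⟩ := hsh (ε/3) hε3
    have hmin : (0:ℝ) < min (δ/2) (ε/3) := lt_min (by linarith) hε3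
    obtain ⟨N1, hN1, h1⟩ := hoc (min (δ/2) (ε/3)) hmin
    obtain ⟨N2, hN2, h2⟩ := hoc' (ε/3) hε3
    set n := max m (max N1 N2) with hn
    have hnm : m ≤ n := le_max_left _ _
    have hnN1 : N1 ≤ n := le_trans (le_max_left _ _) (le_max_right _ _)
    have hnN2 : N2 ≤ n := le_trans (le_max_right _ _) (le_max_right _ _)
    refine ⟨δ/2, by linarith, ?_⟩
    intro ρ hρ0 hρ
    have hclose : ∀ y : X, dist (F n y) (f y) < δ / 2 := by
      intro y
      have := h1 n hnN1 y 1 le_rfl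
      simp only [pow_one] at this
      exact this.trans_le (min_le_left _ _)
    have hFpo : ∀ i : ℤ, dist (F n (ρ i)) (ρ (i + 1)) < δ := by
      intro i
      calc dist (F n (ρ i)) (ρ (i + 1))
          ≤ dist (F n (ρ i)) (f (ρ i)) + dist (f (ρ i)) (ρ (i + 1)) := dist_triangle _ _ _
        _ < δ / 2 + δ / 2 := add_lt_add (hclose (ρ i)) (hρ i)
        _ = δ := by ring
    obtain ⟨y, hy⟩ := hshad n hnm ρ hρ0 hFpo
    refine ⟨y, fun i => ?_⟩
    have hz : dist ((F n ^ i) y) ((f ^ i) y) < ε / 3 :=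
      zpow_close_aux (F n) f (ε/3) hε3
        (fun z k hk => (h1 n hnN1 z k hk).trans_le (min_le_right _ _))
        (fun z k hk => h2 n hnN2 z k hk) y i
    calc dist ((f ^ i) y) (ρ i)
        ≤ dist ((f ^ i) y) ((F n ^ i) y) + dist ((F n ^ i) y) (ρ i) := dist_triangle _ _ _
      _ < ε / 3 + ε / 3 := by rw [dist_comm ((f ^ i) y)]; exact add_lt_add hz (hy i)
      _ < ε := by linarith
end

section
/- Let (X,d) be a metric space and let f_n (n ∈ ℕ⁺) and f be uniform equivalences of X such that f_n orbitally converges to f and f_n⁻¹ orbitally converges to f⁻¹. Then a point x ∈ X is an α-persistent point of f if and only if for every ε > 0 there exist δ > 0 and m ∈ ℕ⁺ such that δ ∈ P_α(f_n, x, ε) for all n ≥ m (i.e. ⋃_{m≥1} ⋂_{n≥m} P_α(f_n, x, ε) ≠ ∅ for every ε > 0). -/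
/-- `δ ∈ P_α(f, x, ε)`: `δ` witnesses `α`-persistence of `f` at `x` for tolerance `ε`. -/
def AlphaPersistWitness {X : Type*} [MetricSpace X]
    (f : Equiv.Perm X) (x : X) (ε δ : ℝ) : Prop :=
  ∀ g : Equiv.Perm X, IsUniformEquiv g → C0Dist f g < δ →
    ∃ y : X, ∀ n : ℤ, dist ((f ^ n) y) ((g ^ n) x) < ε

lemma min_add_one_le {a b : ℝ} (ha : 0 ≤ a) (hb : 0 ≤ b) :
    min (a + b) 1 ≤ min a 1 + min b 1 := by
  rcases le_total 1 a with h | h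
  · have : min a 1 = 1 := min_eq_right h
    have hb1 : (0:ℝ) ≤ min b 1 := le_min hb zero_le_one
    calc min (a + b) 1 ≤ 1 := min_le_right _ _
      _ ≤ min a 1 + min b 1 := by rw [this]; linarith
  · rcases le_total 1 b with h' | h'
    · have : min b 1 = 1 := min_eq_right h'
      have ha1 : (0:ℝ) ≤ min a 1 := le_min ha zero_le_one
      calc min (a + b) 1 ≤ 1 := min_le_right _ _
        _ ≤ min a 1 + min b 1 := by rw [this]; linarith
    · calc min (a + b) 1 ≤ a + b := min_le_left _ _
        _ = min a 1 + min b 1 := by rw [min_eq_left h, min_eq_left h']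

lemma c0dist_nonneg {X : Type*} [MetricSpace X] (f g : X → X) : 0 ≤ C0Dist f g :=
  Real.iSup_nonneg fun x => le_min dist_nonneg zero_le_one

lemma c0dist_le {X : Type*} [MetricSpace X] {f g : X → X} {c : ℝ} (hc : 0 ≤ c)
    (h : ∀ x, dist (f x) (g x) ≤ c) : C0Dist f g ≤ c :=
  Real.iSup_le (fun x => (min_le_left _ _).trans (h x)) hc

lemma c0dist_bddAbove {X : Type*} [MetricSpace X] (f g : X → X) :
    BddAbove (Set.range fun x => min (dist (f x) (g x)) 1) := by
  refine ⟨1, ?_⟩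
  rintro r ⟨x, rfl⟩
  exact min_le_right _ _

lemma c0dist_triangle {X : Type*} [MetricSpace X] (f g h : X → X) :
    C0Dist f h ≤ C0Dist f g + C0Dist g h := by
  refine Real.iSup_le (fun x => ?_)
    (add_nonneg (c0dist_nonneg f g) (c0dist_nonneg g h))
  have h1 : min (dist (f x) (h x)) 1 ≤ min (dist (f x) (g x)) 1 + min (dist (g x) (h x)) 1 := by
    calc min (dist (f x) (h x)) 1
        ≤ min (dist (f x) (g x) + dist (g x) (h x)) 1 :=
          min_le_min (dist_triangle _ _ _) le_rfl
      _ ≤ _ := min_add_one_le dist_nonneg dist_nonneg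
  have h2 : min (dist (f x) (g x)) 1 ≤ C0Dist f g :=
    le_ciSup (c0dist_bddAbove f g) x
  have h3 : min (dist (g x) (h x)) 1 ≤ C0Dist g h :=
    le_ciSup (c0dist_bddAbove g h) x
  linarith

lemma c0dist_symm {X : Type*} [MetricSpace X] (f g : X → X) :
    C0Dist f g = C0Dist g f := by
  unfold C0Dist
  simp only [dist_comm]

/-- Closeness of positive powers of `g, h` and of `g⁻¹, h⁻¹` gives closeness
of all integer powers. -/
lemma zpow_close {X : Type*} [MetricSpace X] {g h : Equiv.Perm X} {ε : ℝ} (hε : 0 < ε)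
    (hpos : ∀ y : X, ∀ k : ℕ, 1 ≤ k → dist ((g ^ k) y) ((h ^ k) y) < ε)
    (hneg : ∀ y : X, ∀ k : ℕ, 1 ≤ k → dist ((g⁻¹ ^ k) y) ((h⁻¹ ^ k) y) < ε) :
    ∀ y : X, ∀ k : ℤ, dist ((g ^ k) y) ((h ^ k) y) < ε := by
  intro y k
  obtain ⟨n, rfl | rfl⟩ := k.eq_nat_or_neg
  · rcases Nat.eq_zero_or_pos n with rfl | hn
    · simpa using hε
    · rw [zpow_natCast, zpow_natCast]
      exact hpos y n hn
  · rcases Nat.eq_zero_or_pos n with rfl | hn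
    · simpa using hε
    · have e1 : g ^ (-(n:ℤ)) = g⁻¹ ^ n := by
        rw [zpow_neg, zpow_natCast, inv_pow]
      have e2 : h ^ (-(n:ℤ)) = h⁻¹ ^ n := by
        rw [zpow_neg, zpow_natCast, inv_pow]
      rw [e1, e2]
      exact hneg y n hn

/-- Orbital convergence (of the uniform equivalences and of their
inverses) and `α`-persistent points. `x` is an `α`-persistent point of `f` iff for
every `ε > 0` the set `⋃_{m≥1} ⋂_{n≥m} P_α(f_n, x, ε)` is nonempty. -/
theorem alpha_persistent_point_iff_of_oc
    {X : Type*} [MetricSpace X] (F : ℕ → Equiv.Perm X) (f : Equiv.Perm X)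
    (hF : ∀ n, IsUniformEquiv (F n)) (hf : IsUniformEquiv f)
    (hoc : ∀ ε : ℝ, 0 < ε → ∃ N : ℕ, 1 ≤ N ∧ ∀ n, N ≤ n → ∀ x : X, ∀ k : ℕ,
      1 ≤ k → dist ((F n ^ k) x) ((f ^ k) x) < ε)
    (hoc' : ∀ ε : ℝ, 0 < ε → ∃ N : ℕ, 1 ≤ N ∧ ∀ n, N ≤ n → ∀ x : X, ∀ k : ℕ,
      1 ≤ k → dist (((F n)⁻¹ ^ k) x) ((f⁻¹ ^ k) x) < ε)
    (x : X) :
    (∀ ε : ℝ, 0 < ε → ∃ δ : ℝ, 0 < δ ∧ AlphaPersistWitness f x ε δ) ↔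
    (∀ ε : ℝ, 0 < ε → ∃ δ : ℝ, 0 < δ ∧ ∃ m : ℕ, 1 ≤ m ∧
        ∀ n, m ≤ n → AlphaPersistWitness (F n) x ε δ) := by
  constructor
  · -- forward direction
    intro H ε hε
    obtain ⟨δ, hδ, hwit⟩ := H (ε / 3) (by linarith)
    obtain ⟨N1, hN1, h1⟩ := hoc (ε / 3) (by linarith)
    obtain ⟨N2, hN2, h2⟩ := hoc' (ε / 3) (by linarith)
    obtain ⟨N3, hN3, h3⟩ := hoc (δ / 2) (by linarith)
    refine ⟨δ / 2, by linarith, max N1 (max N2 N3), le_trans hN1 (le_max_left _ _), ?_⟩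
    intro n hn g hg hdist
    have hn1 : N1 ≤ n := le_trans (le_max_left _ _) hn
    have hn2 : N2 ≤ n := le_trans ((le_max_left _ _).trans (le_max_right _ _)) hn
    have hn3 : N3 ≤ n := le_trans ((le_max_right _ _).trans (le_max_right _ _)) hn
    -- C0Dist f g < δ
    have hc1 : C0Dist (f : X → X) (F n) ≤ δ / 2 := by
      refine c0dist_le (by linarith) fun y => ?_
      rw [dist_comm]
      have := h3 n hn3 y 1 le_rfl
      simpa using this.le
    have hfg : C0Dist (f : X → X) g < δ := by
      calc C0Dist (f : X → X) g ≤ C0Dist (f : X → X) (F n) + C0Dist (F n : X → X) g :=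
            c0dist_triangle _ _ _
        _ < δ / 2 + δ / 2 := by exact add_lt_add_of_le_of_lt hc1 hdist
        _ = δ := by ring
    obtain ⟨y, hy⟩ := hwit g hg hfg
    refine ⟨y, fun k => ?_⟩
    have hclose : dist (((F n) ^ k) y) ((f ^ k) y) < ε / 3 :=
      zpow_close (by linarith) (h1 n hn1) (h2 n hn2) y k
    calc dist (((F n) ^ k) y) ((g ^ k) x)
        ≤ dist (((F n) ^ k) y) ((f ^ k) y) + dist ((f ^ k) y) ((g ^ k) x) :=
          dist_triangle _ _ _
      _ < ε / 3 + ε / 3 := add_lt_add hclose (hy k)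
      _ < ε := by linarith
  · -- reverse direction
    intro H ε hε
    obtain ⟨δ, hδ, m, hm, hwit⟩ := H (ε / 3) (by linarith)
    refine ⟨δ / 2, by linarith, ?_⟩
    intro g hg hdist
    -- choose n large depending on g
    set c : ℝ := δ / 2 - C0Dist (f : X → X) g with hc
    have hcpos : 0 < c := by
      have := hdist
      simp only [hc]
      linarith
    obtain ⟨N1, hN1, h1⟩ := hoc (ε / 3) (by linarith)
    obtain ⟨N2, hN2, h2⟩ := hoc' (ε / 3) (by linarith)
    obtain ⟨N3, hN3, h3⟩ := hoc c hcpos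
    set n := max m (max N1 (max N2 N3)) with hn
    have hnm : m ≤ n := le_max_left _ _
    have hn1 : N1 ≤ n := le_trans (le_max_left _ _) (le_max_right _ _)
    have hn2 : N2 ≤ n := le_trans ((le_max_left _ _).trans (le_max_right _ _)) (le_max_right _ _)
    have hn3 : N3 ≤ n := le_trans ((le_max_right _ _).trans (le_max_right _ _)) (le_max_right _ _)
    have hc1 : C0Dist ((F n : Equiv.Perm X) : X → X) f ≤ c := by
      refine c0dist_le hcpos.le fun y => ?_
      have := h3 n hn3 y 1 le_rfl
      simpa using this.le
    have hFg : C0Dist ((F n : Equiv.Perm X) : X → X) g < δ := by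
      calc C0Dist ((F n : Equiv.Perm X) : X → X) g
          ≤ C0Dist ((F n : Equiv.Perm X) : X → X) f + C0Dist (f : X → X) g :=
            c0dist_triangle _ _ _
        _ ≤ c + C0Dist (f : X → X) g := by linarith
        _ = δ / 2 := by simp [hc]
        _ < δ := by linarith
    obtain ⟨y, hy⟩ := hwit n hnm g hg hFg
    refine ⟨y, fun k => ?_⟩
    have hclose : dist (((F n) ^ k) y) ((f ^ k) y) < ε / 3 :=
      zpow_close (by linarith) (h1 n hn1) (h2 n hn2) y k
    calc dist ((f ^ k) y) ((g ^ k) x)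
        ≤ dist ((f ^ k) y) (((F n) ^ k) y) + dist (((F n) ^ k) y) ((g ^ k) x) :=
          dist_triangle _ _ _
      _ < ε / 3 + ε / 3 := by
          rw [dist_comm]
          exact add_lt_add hclose (hy k)
      _ < ε := by linarith
end

section
/- Let (X,d) be an unbounded metric space and let f be a uniformly continuous surjective self-map of X such that the family of iterates {f^n : n ∈ ℕ} is uniformly equicontinuous, i.e. for every ε > 0 there exists δ > 0 such that d(x,y) < δ implies d(f^n(x), f^n(y)) < ε for all x, y ∈ X and all n ∈ ℕ. Then f has no specification points: Sp(f) = ∅. -/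
/-- A surjective uniformly continuous self-map of an unbounded metric
space whose iterates form a uniformly equicontinuous family has no specification
points: `Sp(f) = ∅`. -/
theorem no_specification_point_of_equicontinuous
    {X : Type*} [MetricSpace X]
    (hX : ¬ Bornology.IsBounded (Set.univ : Set X))
    (f : X → X) (hf : UniformContinuous f) (hsurj : Function.Surjective f)
    (heq : ∀ ε : ℝ, 0 < ε → ∃ δ : ℝ, 0 < δ ∧ ∀ x y : X, dist x y < δ →
      ∀ n : ℕ, dist (f^[n] x) (f^[n] y) < ε)
    (x : X) :
    ¬ (∀ ε : ℝ, 0 < ε → ∃ M : ℕ, 1 ≤ M ∧ SpecWitness f x ε M) := by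
  intro h
  obtain ⟨δ, hδ, hδ'⟩ := heq 1 one_pos
  obtain ⟨M, hM, hspec⟩ := h δ hδ
  apply hX
  have key : ∀ w : X, dist (f^[M] x) w < 1 + δ := by
    intro w
    obtain ⟨z, hz⟩ := (hsurj.iterate M) w
    have hgap : ∀ j : ℕ, j + 1 < 2 →
        (fun n => if n = 0 then 0 else M) j < (fun n => if n = 0 then 0 else M) (j + 1) ∧
        M ≤ (fun n => if n = 0 then 0 else M) (j + 1) - (fun n => if n = 0 then 0 else M) j := by
      intro j hj
      have hj0 : j = 0 := by omega
      subst hj0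
      norm_num
      omega
    obtain ⟨y, hy⟩ := hspec 2 (by norm_num)
      (fun n => if n = 0 then x else z) rfl
      (fun n => if n = 0 then 0 else M) (fun n => if n = 0 then 0 else M)
      (fun j _ => le_refl _) hgap
    have h0 := hy 0 (by norm_num) 0 (by simp) (by simp)
    have h1 := hy 1 (by norm_num) M (by simp) (by simp)
    simp only [if_pos rfl, Function.iterate_zero, id] at h0
    simp only [if_neg one_ne_zero] at h1
    have hfn := hδ' y x h0 M
    calc dist (f^[M] x) w ≤ dist (f^[M] x) (f^[M] y) + dist (f^[M] y) w := dist_triangle _ _ _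
      _ < 1 + δ := by rw [dist_comm (f^[M] x), hz] at *; linarith
  rw [Metric.isBounded_iff_subset_ball (f^[M] x)]
  exact ⟨1 + δ, fun w _ => by simpa [Metric.mem_ball, dist_comm] using key w⟩
end
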